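/- arXiv:math/0611591 — 5 statements merged into one kernel-verified Lean document; each statement's English description precedes it below -/
import Mathlib

section
/- Let α be a finite set with at least 3 elements. If a subgroup G of the symmetric group Sym(α) is generated by a set of 3-cycles and acts transitively on α, then G equals the alternating group Alt(α). (First assertion of the 3-cycle Lemma, in the transitive case.) -/
open Equiv Equiv.Perm Subgroup

namespace ThreeCycleAux
variable {α : Type*} [DecidableEq α]

/-- The 3-cycle sending `x → z → y → x`. -/
def tc (x y z : α) : Perm α := Equiv.swap x y * Equiv.swap x z

lemma tc_inv (x y z : α) : (tc x y z)⁻¹ = tc x z y := by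
  simp [tc, mul_inv_rev]

lemma tc_glue (x y z w : α) : tc x y z * tc x z w = tc x y w := by
  simp [tc, mul_assoc]

lemma tc_glue' (x y z w : α) : (tc x y z)⁻¹ * tc x y w = tc x z w := by
  simp [tc, mul_inv_rev, mul_assoc]

lemma tc_conj (π : Perm α) (x y z : α) : π * tc x y z * π⁻¹ = tc (π x) (π y) (π z) := by
  rw [tc, tc, swap_apply_apply, swap_apply_apply]; group

lemma tc_rot {x y z : α} (hxy : x ≠ y) (hxz : x ≠ z) (hyz : y ≠ z) : tc x y z = tc z x y := by
  ext t
  simp only [tc, Perm.mul_apply, Equiv.swap_apply_def]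
  split_ifs <;> simp_all

lemma tc_rot2 {x y z : α} (hxy : x ≠ y) (hxz : x ≠ z) (hyz : y ≠ z) : tc x y z = tc y z x := by
  rw [tc_rot hxy hxz hyz, tc_rot hxz.symm hyz.symm hxy]

lemma tc_apply_fst {x y z : α} (hxy : x ≠ y) (hxz : x ≠ z) (hyz : y ≠ z) : tc x y z x = z := by
  simp [tc, Perm.mul_apply, Equiv.swap_apply_of_ne_of_ne hxz.symm hyz.symm]

lemma tc_apply_out {x y z t : α} (htx : t ≠ x) (hty : t ≠ y) (htz : t ≠ z) : tc x y z t = t := by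
  simp [tc, Perm.mul_apply, Equiv.swap_apply_of_ne_of_ne, htx, hty, htz]

lemma isThreeCycle_decomp [Fintype α] {σ : Perm α} (h : σ.IsThreeCycle) {d : α} (hd : σ d ≠ d) :
    ∃ e f : α, σ = tc d f e ∧ e ≠ d ∧ f ≠ e ∧ f ≠ d ∧ σ d = e := by
  refine ⟨σ d, σ (σ d), ?_⟩
  set e := σ d with he
  set f := σ e with hf
  have h3 : σ ^ 3 = 1 := by rw [← h.orderOf]; exact pow_orderOf_eq_one σ
  have hfd : σ f = d := by
    have := Equiv.ext_iff.mp h3 d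
    simpa [pow_succ, Perm.mul_apply, ← he, ← hf] using this
  have hed : e ≠ d := hd
  have hfe : f ≠ e := by
    intro h'
    exact hd (by simpa [← he] using σ.injective (hf ▸ h' : σ e = σ d).symm ▸ rfl)
  have hfd' : f ≠ d := fun h' => hed (by rw [← hfd, h'])
  refine ⟨?_, hed, hfe, hfd', rfl⟩
  have hsupp : σ.support = {d, e, f} := by
    refine (Finset.eq_of_subset_of_card_le ?_ ?_).symm
    · intro x hx
      simp only [Finset.mem_insert, Finset.mem_singleton] at hx
      rcases hx with rfl | rfl | rfl <;> rw [mem_support]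
      · exact hd
      · rw [← hf]; exact hfe
      · rw [hfd]; exact fun h' => hfd' h'.symm
    · rw [h.card_support]
      have : ({d, e, f} : Finset α).card = 3 := by
        rw [Finset.card_insert_of_notMem (by simp [hed.symm, hfd'.symm]),
          Finset.card_insert_of_notMem (by simp [hfe.symm]), Finset.card_singleton]
      omega
  ext x
  by_cases hxd : x = d
  · subst hxd
    rw [tc_apply_fst hfd'.symm hed.symm hfe]
  by_cases hxe : x = e
  · subst hxe
    rw [← hf, tc, Perm.mul_apply, Equiv.swap_apply_right, Equiv.swap_apply_left]
  by_cases hxf : x = f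
  · subst hxf
    rw [hfd, tc, Perm.mul_apply, Equiv.swap_apply_of_ne_of_ne hfd' hfe,
      Equiv.swap_apply_right]
  · rw [tc_apply_out hxd hxf hxe]
    have : x ∉ σ.support := by simp [hsupp, hxd, hxe, hxf]
    exact Equiv.Perm.notMem_support.mp this

/-- If `G` contains 3-cycles `tc p q r` and `tc p s t` on five distinct points,
then it contains `tc p q t`. -/
lemma five {G : Subgroup (Perm α)} {p q r s t : α}
    (hpq : p ≠ q) (hpr : p ≠ r) (hps : p ≠ s) (hpt : p ≠ t)
    (hqr : q ≠ r) (hqs : q ≠ s) (hqt : q ≠ t)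
    (hrs : r ≠ s) (hrt : r ≠ t) (hst : s ≠ t)
    (h1 : tc p q r ∈ G) (h2 : tc p s t ∈ G) : tc p q t ∈ G := by
  have c1 : tc r s t ∈ G := by
    have h := G.mul_mem (G.mul_mem h1 h2) (G.inv_mem h1)
    rwa [tc_conj, tc_apply_fst hpq hpr hqr,
      tc_apply_out hps.symm hqs.symm hrs.symm, tc_apply_out hpt.symm hqt.symm hrt.symm] at h
  have c2 : tc s t p ∈ G := by rwa [tc_rot2 hps hpt hst] at h2
  have c3 : tc s p t ∈ G := by rw [← tc_inv s t p]; exact G.inv_mem c2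
  have c4 : tc s t r ∈ G := by rwa [tc_rot2 hrs hrt hst] at c1
  have c5 : tc s p r ∈ G := by rw [← tc_glue s p t r]; exact G.mul_mem c3 c4
  have c6 : tc p r s ∈ G := by rwa [tc_rot2 hps.symm hrs.symm hpr] at c5
  have c7 : tc p q s ∈ G := by rw [← tc_glue p q r s]; exact G.mul_mem h1 c6
  rw [← tc_glue p q s t]; exact G.mul_mem c7 h2

end ThreeCycleAux

open ThreeCycleAux

/-- **3-cycle Lemma, first assertion (transitive case).** A transitive subgroup of
`Sym(α)` generated by a set of 3-cycles is the alternating group, provided `|α| ≥ 3`. -/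
theorem threeCycle_transitive_eq_alternating {α : Type*} [Fintype α] [DecidableEq α]
    (hcard : 3 ≤ Fintype.card α)
    (G : Subgroup (Equiv.Perm α)) (S : Set (Equiv.Perm α))
    (hS : ∀ σ ∈ S, σ.IsThreeCycle)
    (hgen : Subgroup.closure S = G)
    (htrans : ∀ x y : α, ∃ g ∈ G, g x = y) :
    G = alternatingGroup α := by
  classical
  have hGalt : G ≤ alternatingGroup α := by
    rw [← hgen, Subgroup.closure_le]
    intro σ hσ
    exact (hS σ hσ).mem_alternatingGroup
  obtain ⟨x0, y0, hxy0⟩ := Fintype.exists_pair_of_one_lt_card (α := α) (by omega)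
  have hSne : S.Nonempty := by
    by_contra hemp
    rw [Set.not_nonempty_iff_eq_empty] at hemp
    subst hemp
    rw [Subgroup.closure_empty] at hgen
    obtain ⟨g, hg, hgx⟩ := htrans x0 y0
    rw [← hgen, Subgroup.mem_bot] at hg
    subst hg
    simp only [Equiv.Perm.coe_one, id_eq] at hgx
    exact hxy0 hgx
  obtain ⟨σ0, hσ0S⟩ := hSne
  have hσ0G : σ0 ∈ G := hgen ▸ Subgroup.subset_closure hσ0S
  have hσ03 := hS σ0 hσ0S
  have hsupp0 : σ0.support.Nonempty := Finset.card_pos.mp (by rw [hσ03.card_support]; norm_num)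
  obtain ⟨a, ha⟩ := hsupp0
  have haa : σ0 a ≠ a := Equiv.Perm.mem_support.mp ha
  obtain ⟨c, b, heq0, hca, hbc, hba, -⟩ := isThreeCycle_decomp hσ03 haa
  have ht : tc a b c ∈ G := heq0 ▸ hσ0G
  set B : Set α := {x | x = a ∨ tc a b x ∈ G} with hBdef
  -- absorption: any 3-cycle in G maps B into B
  have habs : ∀ τ, τ ∈ G → τ.IsThreeCycle → ∀ d, d ∈ B → τ d ∈ B := by
    intro τ hτG hτ3 d hdB
    by_cases hdd : τ d = d
    · rwa [hdd]
    obtain ⟨e, f, heq, hed, hfe, hfd, hτd⟩ := isThreeCycle_decomp hτ3 hdd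
    rw [hτd]
    have hτ' : tc d f e ∈ G := heq ▸ hτG
    by_cases hea : e = a
    · exact Or.inl hea
    right
    -- goal : tc a b e ∈ G
    by_cases heb : e = b
    · rw [heb, show tc a b b = 1 from by rw [tc, Equiv.swap_mul_self]]
      exact G.one_mem
    by_cases hda : d = a
    · rw [hda] at hτ'
      have hfa : f ≠ a := by rw [hda] at hfd; exact hfd
      by_cases hfb : f = b
      · rwa [hfb] at hτ'
      by_cases hec : e = c
      · rw [hec]; exact ht
      by_cases hfc : f = c
      · rw [← tc_glue a b c e]
        exact G.mul_mem ht (by rwa [hfc] at hτ')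
      · exact five (Ne.symm hba) (Ne.symm hca) (Ne.symm hfa) (fun h => hea h.symm)
          hbc (fun h => hfb h.symm) (fun h => heb h.symm) (fun h => hfc h.symm)
          (fun h => hec h.symm) hfe ht hτ'
    by_cases hdb : d = b
    · rw [hdb] at hτ'
      have hfb : f ≠ b := by rw [hdb] at hfd; exact hfd
      by_cases hfa : f = a
      · rw [hfa] at hτ'
        have h1 : tc a e b ∈ G := by
          rwa [tc_rot2 hba (Ne.symm heb) (Ne.symm hea)] at hτ'
        rw [← tc_inv a e b]
        exact G.inv_mem h1
      by_cases hec : e = c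
      · rw [hec]; exact ht
      have hbce : tc b c e ∈ G := by
        by_cases hfc : f = c
        · rwa [hfc] at hτ'
        · exact five hbc hba (Ne.symm hfb) (Ne.symm heb)
            hca (fun h => hfc h.symm) (fun h => hec h.symm)
            (fun h => hfa h.symm) (Ne.symm hea) hfe
            (by rwa [tc_rot2 (Ne.symm hba) (Ne.symm hca) hbc] at ht) hτ'
      have t1 : tc b c a ∈ G := by rwa [tc_rot2 (Ne.symm hba) (Ne.symm hca) hbc] at ht
      have t2 : tc b e c ∈ G := by rw [← tc_inv b c e]; exact G.inv_mem hbce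
      have t3 : tc b e a ∈ G := by rw [← tc_glue b e c a]; exact G.mul_mem t2 t1
      rwa [tc_rot (Ne.symm heb) hba hea] at t3
    -- now d ∉ {a, b}
    have hd' : tc a b d ∈ G := hdB.resolve_left hda
    by_cases hfb : f = b
    · rw [hfb] at hτ'
      have t1 : tc b d a ∈ G := by
        rwa [tc_rot2 (Ne.symm hba) (fun h => hda h.symm) (fun h => hdb h.symm)] at hd'
      have t2 : tc b e d ∈ G := by
        rwa [tc_rot2 hdb (Ne.symm hed) (Ne.symm heb)] at hτ'
      have t3 : tc b e a ∈ G := by rw [← tc_glue b e d a]; exact G.mul_mem t2 t1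
      rwa [tc_rot (Ne.symm heb) hba hea] at t3
    have hdae : tc d a e ∈ G := by
      by_cases hfa : f = a
      · rwa [hfa] at hτ'
      · exact five hda hdb (Ne.symm hfd) (Ne.symm hed)
          (Ne.symm hba) (fun h => hfa h.symm) (Ne.symm hea)
          (fun h => hfb h.symm) (Ne.symm heb) hfe
          (by rwa [tc_rot (Ne.symm hba) (fun h => hda h.symm) (fun h => hdb h.symm)] at hd') hτ'
    have t1 : tc a e d ∈ G := by
      rwa [tc_rot2 hda (Ne.symm hed) (Ne.symm hea)] at hdae
    have t2 : tc a d e ∈ G := by rw [← tc_inv a e d]; exact G.inv_mem t1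
    rw [← tc_glue a b d e]
    exact G.mul_mem hd' t2
  -- every element of G maps B into B
  have hinv : ∀ g ∈ G, ∀ d ∈ B, g d ∈ B := by
    have key : ∀ g ∈ Subgroup.closure S, (∀ d ∈ B, g d ∈ B) ∧ (∀ d ∈ B, g⁻¹ d ∈ B) := by
      intro g hg
      induction hg using Subgroup.closure_induction with
      | mem σ hσ =>
        have hσG : σ ∈ G := hgen ▸ Subgroup.subset_closure hσ
        exact ⟨habs σ hσG (hS σ hσ), habs σ⁻¹ (G.inv_mem hσG) (hS σ hσ).inv⟩
      | one => simp
      | mul x y hx hy Hx Hy =>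
        refine ⟨fun d hd => ?_, fun d hd => ?_⟩
        · rw [Equiv.Perm.mul_apply]; exact Hx.1 _ (Hy.1 d hd)
        · rw [mul_inv_rev, Equiv.Perm.mul_apply]; exact Hy.2 _ (Hx.2 d hd)
      | inv x hx Hx =>
        refine ⟨Hx.2, fun d hd => ?_⟩
        rw [inv_inv]; exact Hx.1 d hd
    intro g hg
    exact (key g (by rwa [hgen])).1
  have hBuniv : ∀ x : α, x ∈ B := by
    intro x
    obtain ⟨g, hgG, hga⟩ := htrans a x
    exact hga ▸ hinv g hgG a (Or.inl rfl)
  have Hb : ∀ t : α, t ≠ a → tc a b t ∈ G := fun t htne => (hBuniv t).resolve_left htne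
  have CC : ∀ x y : α, x ≠ a → y ≠ a → tc a x y ∈ G := by
    intro x y hx hy
    rw [← tc_glue' a b x y]
    exact G.mul_mem (G.inv_mem (Hb x hx)) (Hb y hy)
  have hAltle : alternatingGroup α ≤ G := by
    rw [← Equiv.Perm.closure_three_cycles_eq_alternating, Subgroup.closure_le]
    intro σ hσ3
    have hσ3' : σ.IsThreeCycle := hσ3
    have hsupp : σ.support.Nonempty := Finset.card_pos.mp (by rw [hσ3'.card_support]; norm_num)
    obtain ⟨d, hdsupp⟩ := hsupp
    have hdd : σ d ≠ d := Equiv.Perm.mem_support.mp hdsupp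
    obtain ⟨e, f, heq, hed, hfe, hfd, -⟩ := isThreeCycle_decomp hσ3' hdd
    show σ ∈ G
    rw [heq]
    by_cases hda : d = a
    · rw [hda]
      exact CC f e (by rwa [hda] at hfd) (by rwa [hda] at hed)
    by_cases hfa : f = a
    · rw [hfa]
      rw [tc_rot2 hda (Ne.symm hed) (by rw [hfa] at hfe; exact hfe)]
      exact CC e d (by rw [hfa] at hfe; exact fun h => hfe h.symm) hda
    by_cases hea : e = a
    · rw [hea]
      rw [tc_rot (Ne.symm hfd) hda (by rwa [hea] at hfe)]
      exact CC d f hda hfa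
    · -- conjugate `tc a e f` by `swap a d * swap f e`
      have hπG : Equiv.swap a d * Equiv.swap f e ∈ G := by
        have hid : Equiv.swap a d * Equiv.swap f e = tc a d f * tc f a e := by
          simp [tc, mul_assoc, Equiv.swap_comm f a]
        rw [hid]
        refine G.mul_mem (CC d f hda hfa) ?_
        rw [tc_rot2 hfa hfe (fun h => hea h.symm)]
        exact CC e f hea hfa
      have hX : tc a e f ∈ G := CC e f hea hfa
      have hmem := G.mul_mem (G.mul_mem hπG hX) (G.inv_mem hπG)
      rwa [tc_conj,
        show (Equiv.swap a d * Equiv.swap f e) a = d by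
          rw [Equiv.Perm.mul_apply, Equiv.swap_apply_of_ne_of_ne (fun h => hfa h.symm)
            (fun h => hea h.symm), Equiv.swap_apply_left],
        show (Equiv.swap a d * Equiv.swap f e) e = f by
          rw [Equiv.Perm.mul_apply, Equiv.swap_apply_right,
            Equiv.swap_apply_of_ne_of_ne hfa hfd],
        show (Equiv.swap a d * Equiv.swap f e) f = e by
          rw [Equiv.Perm.mul_apply, Equiv.swap_apply_left,
            Equiv.swap_apply_of_ne_of_ne hea hed]] at hmem
  exact le_antisymm hGalt hAltle
end

section
/- (Product-one Lemma) Let G be a group and g = (g_1,…,g_r) ∈ G^r with g_1 g_2 ⋯ g_r = 1. Suppose 1 ≤ i ≤ j ≤ r satisfy g_i g_{i+1} ⋯ g_j = 1, and let γ be an element of the subgroup generated by g_i,…,g_j. Then g is braid equivalent to the tuple (g_1,…,g_{i−1}, γ g_i γ^{-1}, γ g_{i+1} γ^{-1},…, γ g_j γ^{-1}, g_{j+1},…,g_r). -/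
/-- Elementary braid move: replace adjacent entries `(a, b)` by `(a * b * a⁻¹, a)`. -/
def BraidMove {G : Type*} [Group G] (x y : List G) : Prop :=
  ∃ (l₁ l₂ : List G) (a b : G),
    x = l₁ ++ a :: b :: l₂ ∧ y = l₁ ++ (a * b * a⁻¹) :: a :: l₂

/-- Braid equivalence: the equivalence relation generated by elementary braid moves. -/
def BraidEquiv {G : Type*} [Group G] : List G → List G → Prop :=
  Relation.EqvGen BraidMove

section Aux

variable {G : Type*} [Group G]

lemma braidEquiv_refl (x : List G) : BraidEquiv x x := Relation.EqvGen.refl x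

lemma braidEquiv_symm {x y : List G} (h : BraidEquiv x y) : BraidEquiv y x :=
  Relation.EqvGen.symm x y h

lemma braidEquiv_trans {x y z : List G} (h : BraidEquiv x y) (h' : BraidEquiv y z) :
    BraidEquiv x z := Relation.EqvGen.trans x y z h h'

lemma braidMove_append_left (l : List G) {x y : List G} (h : BraidMove x y) :
    BraidMove (l ++ x) (l ++ y) := by
  obtain ⟨l₁, l₂, a, b, hx, hy⟩ := h
  exact ⟨l ++ l₁, l₂, a, b, by simp [hx], by simp [hy]⟩

lemma braidMove_append_right (l : List G) {x y : List G} (h : BraidMove x y) :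
    BraidMove (x ++ l) (y ++ l) := by
  obtain ⟨l₁, l₂, a, b, hx, hy⟩ := h
  exact ⟨l₁, l₂ ++ l, a, b, by simp [hx], by simp [hy]⟩

lemma braidMove_map (c : G) {x y : List G} (h : BraidMove x y) :
    BraidMove (x.map fun a => c * a * c⁻¹) (y.map fun a => c * a * c⁻¹) := by
  obtain ⟨l₁, l₂, a, b, hx, hy⟩ := h
  refine ⟨l₁.map fun a => c * a * c⁻¹, l₂.map fun a => c * a * c⁻¹,
    c * a * c⁻¹, c * b * c⁻¹, by simp [hx], ?_⟩
  subst hy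
  simp only [List.map_append, List.map_cons]
  congr 2
  group

lemma braidMove_prod {x y : List G} (h : BraidMove x y) : x.prod = y.prod := by
  obtain ⟨l₁, l₂, a, b, hx, hy⟩ := h
  subst hx hy
  simp [List.prod_append, mul_assoc]

lemma braidEquiv_prod {x y : List G} (h : BraidEquiv x y) : x.prod = y.prod := by
  induction h with
  | rel a b hab => exact braidMove_prod hab
  | refl a => rfl
  | symm a b _ ih => exact ih.symm
  | trans a b c _ _ ih₁ ih₂ => exact ih₁.trans ih₂

lemma braidEquiv_append_left (l : List G) {x y : List G} (h : BraidEquiv x y) :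
    BraidEquiv (l ++ x) (l ++ y) := by
  induction h with
  | rel a b hab => exact Relation.EqvGen.rel _ _ (braidMove_append_left l hab)
  | refl a => exact braidEquiv_refl _
  | symm a b _ ih => exact braidEquiv_symm ih
  | trans a b c _ _ ih₁ ih₂ => exact braidEquiv_trans ih₁ ih₂

lemma braidEquiv_append_right (l : List G) {x y : List G} (h : BraidEquiv x y) :
    BraidEquiv (x ++ l) (y ++ l) := by
  induction h with
  | rel a b hab => exact Relation.EqvGen.rel _ _ (braidMove_append_right l hab)
  | refl a => exact braidEquiv_refl _
  | symm a b _ ih => exact braidEquiv_symm ih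
  | trans a b c _ _ ih₁ ih₂ => exact braidEquiv_trans ih₁ ih₂

lemma braidEquiv_cons (a : G) {x y : List G} (h : BraidEquiv x y) :
    BraidEquiv (a :: x) (a :: y) := braidEquiv_append_left [a] h

lemma braidEquiv_map (c : G) {x y : List G} (h : BraidEquiv x y) :
    BraidEquiv (x.map fun a => c * a * c⁻¹) (y.map fun a => c * a * c⁻¹) := by
  induction h with
  | rel a b hab => exact Relation.EqvGen.rel _ _ (braidMove_map c hab)
  | refl a => exact braidEquiv_refl _
  | symm a b _ ih => exact braidEquiv_symm ih
  | trans a b c _ _ ih₁ ih₂ => exact braidEquiv_trans ih₁ ih₂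

/-- Moving the head to the tail, where it gets conjugated by the product of the tail. -/
lemma braidEquiv_rot_aux (a : G) (t : List G) :
    BraidEquiv (a :: t) (t ++ [t.prod⁻¹ * a * t.prod]) := by
  induction t generalizing a with
  | nil => simpa using braidEquiv_refl [a]
  | cons b t ih =>
      have h1 : BraidMove (b :: (b⁻¹ * a * b) :: t) (a :: b :: t) := by
        refine ⟨[], t, b, b⁻¹ * a * b, rfl, ?_⟩
        congr 2
        group
      refine braidEquiv_trans (braidEquiv_symm (Relation.EqvGen.rel _ _ h1)) ?_
      refine braidEquiv_trans (braidEquiv_cons b (ih (b⁻¹ * a * b))) ?_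
      have heq : b :: (t ++ [t.prod⁻¹ * (b⁻¹ * a * b) * t.prod]) =
          (b :: t) ++ [(b :: t).prod⁻¹ * a * (b :: t).prod] := by
        simp [mul_assoc]
      rw [heq]
      exact braidEquiv_refl _

/-- Cyclic rotation of a product-one list. -/
lemma braidEquiv_rot (a : G) (t : List G) (h : (a :: t).prod = 1) :
    BraidEquiv (a :: t) (t ++ [a]) := by
  rw [List.prod_cons] at h
  have ht : t.prod = a⁻¹ := (inv_eq_of_mul_eq_one_right h).symm
  have := braidEquiv_rot_aux a t
  rw [ht] at this
  simpa using this

/-- Rotation by an arbitrary amount for product-one lists. -/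
lemma braidEquiv_rotN (u v : List G) (h : (u ++ v).prod = 1) :
    BraidEquiv (u ++ v) (v ++ u) := by
  induction u generalizing v with
  | nil => simpa using braidEquiv_refl v
  | cons a u ih =>
      have h1 : BraidEquiv (a :: (u ++ v)) ((u ++ v) ++ [a]) :=
        braidEquiv_rot a (u ++ v) h
      have h2 : BraidEquiv (u ++ (v ++ [a])) ((v ++ [a]) ++ u) := by
        apply ih
        rw [← List.append_assoc]
        have := braidEquiv_prod h1
        rw [← this]
        exact h
      refine braidEquiv_trans (by simpa using h1) ?_
      simpa using h2

/-- Pushing the head element through the whole list, conjugating everything. -/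
lemma braidEquiv_shift (x : G) (t : List G) :
    BraidEquiv (x :: t) ((t.map fun a => x * a * x⁻¹) ++ [x]) := by
  induction t with
  | nil => simpa using braidEquiv_refl [x]
  | cons b t ih =>
      have h1 : BraidMove (x :: b :: t) ((x * b * x⁻¹) :: x :: t) := ⟨[], t, x, b, rfl, rfl⟩
      refine braidEquiv_trans (Relation.EqvGen.rel _ _ h1) ?_
      simpa using braidEquiv_cons (x * b * x⁻¹) ih

/-- Generator case: conjugating a product-one list by one of its entries. -/
lemma braidEquiv_conj_mem (m : List G) (h : m.prod = 1) {x : G} (hx : x ∈ m) :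
    BraidEquiv m (m.map fun a => x * a * x⁻¹) := by
  obtain ⟨u, v, rfl⟩ := List.append_of_mem hx
  have h1 : BraidEquiv (u ++ x :: v) ((x :: v) ++ u) := braidEquiv_rotN u (x :: v) h
  have h2 : BraidEquiv (x :: (v ++ u)) (((v ++ u).map fun a => x * a * x⁻¹) ++ [x]) :=
    braidEquiv_shift x (v ++ u)
  have h12 : BraidEquiv (u ++ x :: v)
      ((v.map fun a => x * a * x⁻¹) ++ ((u.map fun a => x * a * x⁻¹) ++ [x])) := by
    refine braidEquiv_trans h1 (braidEquiv_trans (by simpa using h2) ?_)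
    exact braidEquiv_refl _
  have h3 : BraidEquiv
      ((v.map fun a => x * a * x⁻¹) ++ ((u.map fun a => x * a * x⁻¹) ++ [x]))
      (((u.map fun a => x * a * x⁻¹) ++ [x]) ++ (v.map fun a => x * a * x⁻¹)) := by
    apply braidEquiv_rotN
    rw [← braidEquiv_prod h12]
    exact h
  refine braidEquiv_trans (braidEquiv_trans h12 h3) ?_
  have heq : ((u.map fun a => x * a * x⁻¹) ++ [x]) ++ (v.map fun a => x * a * x⁻¹) =
      (u ++ x :: v).map fun a => x * a * x⁻¹ := by
    simp [List.map_append]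
  rw [heq]
  exact braidEquiv_refl _

end Aux

/-- **Product-one Lemma.** If `g = l₁ ++ m ++ l₂` has total product 1, the nonempty
consecutive segment `m` has product 1, and `γ` lies in the subgroup generated by the
entries of `m`, then `g` is braid equivalent to the tuple in which every entry of
the segment `m` is conjugated by `γ`. -/
theorem product_one_lemma {G : Type*} [Group G] (l₁ m l₂ : List G)
    (hm : m ≠ []) (hprod : (l₁ ++ m ++ l₂).prod = 1) (hmprod : m.prod = 1)
    (γ : G) (hγ : γ ∈ Subgroup.closure {x | x ∈ m}) :
    BraidEquiv (l₁ ++ m ++ l₂) (l₁ ++ m.map (fun x => γ * x * γ⁻¹) ++ l₂) := by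
  have key : BraidEquiv m (m.map fun a => γ * a * γ⁻¹) := by
    induction hγ using Subgroup.closure_induction with
    | mem x hx => exact braidEquiv_conj_mem m hmprod hx
    | one => simpa using braidEquiv_refl m
    | mul a b ha hb iha ihb =>
        refine braidEquiv_trans iha ?_
        have := braidEquiv_map a ihb
        have heq : (m.map fun y => b * y * b⁻¹).map (fun y => a * y * a⁻¹) =
            m.map fun y => (a * b) * y * (a * b)⁻¹ := by
          rw [List.map_map]
          congr 1
          funext y
          simp [Function.comp]
          group
        rw [heq] at this
        exact this
    | inv a ha iha =>
        have := braidEquiv_map a⁻¹ iha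
        have heq : (m.map fun y => a * y * a⁻¹).map (fun y => a⁻¹ * y * a⁻¹⁻¹) = m := by
          rw [List.map_map]
          have hid : ((fun y => a⁻¹ * y * a⁻¹⁻¹) ∘ fun y => a * y * a⁻¹) = id := by
            funext y
            simp [Function.comp, mul_assoc]
          rw [hid, List.map_id]
        rw [heq] at this
        exact braidEquiv_symm this
  simpa [List.append_assoc] using
    braidEquiv_append_right l₂ (braidEquiv_append_left l₁ key)
end

section
/- Let G be a group, u ≥ 1, and for g_1,…,g_u ∈ G write [g_1,…,g_u] for the 2u-tuple (g_1,…,g_u, g_u^{-1}, g_{u−1}^{-1},…, g_1^{-1}). Then for every permutation π of {1,…,u}, the tuple [g_1,…,g_u] is braid equivalent to [g_{π(1)},…,g_{π(u)}]. -/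
/-- The bracket tuple `[g_1, …, g_u] = (g_1, …, g_u, g_u⁻¹, …, g_1⁻¹)`. -/
def hmBracket {G : Type*} [Group G] (l : List G) : List G :=
  l ++ l.reverse.map (fun x => x⁻¹)

namespace BraidEquiv

variable {G : Type*} [Group G]

@[refl]
theorem refl (x : List G) : BraidEquiv x x := Relation.EqvGen.refl x

theorem symm {x y : List G} (h : BraidEquiv x y) : BraidEquiv y x :=
  Relation.EqvGen.symm _ _ h

theorem trans {x y z : List G} (h : BraidEquiv x y) (h' : BraidEquiv y z) : BraidEquiv x z :=
  Relation.EqvGen.trans _ _ _ h h'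

instance : @Trans (List G) (List G) (List G) BraidEquiv BraidEquiv BraidEquiv := ⟨trans⟩

theorem append_append {x y : List G} (h : BraidEquiv x y) (p s : List G) :
    BraidEquiv (p ++ x ++ s) (p ++ y ++ s) := by
  induction h with
  | rel x y hxy =>
    obtain ⟨l₁, l₂, a, b, rfl, rfl⟩ := hxy
    exact Relation.EqvGen.rel _ _ ⟨p ++ l₁, l₂ ++ s, a, b, by simp, by simp⟩
  | refl x => rfl
  | symm x y _ ih => exact ih.symm
  | trans x y z _ _ ih₁ ih₂ => exact ih₁.trans ih₂

theorem cons {x y : List G} (h : BraidEquiv x y) (a : G) : BraidEquiv (a :: x) (a :: y) := by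
  simpa using h.append_append [a] []

theorem append_right {x y : List G} (h : BraidEquiv x y) (s : List G) :
    BraidEquiv (x ++ s) (y ++ s) := by
  simpa using h.append_append [] s

theorem pair_swap_conj (a b : G) : BraidEquiv [a, b] [b, b⁻¹ * a * b] := by
  refine (Relation.EqvGen.rel _ _ ⟨[], [], b, b⁻¹ * a * b, rfl, ?_⟩).symm
  simp [mul_assoc]

theorem cons_braidEquiv_append_conj (c : G) (m : List G) :
    BraidEquiv (c :: m) (m ++ [m.prod⁻¹ * c * m.prod]) := by
  induction m generalizing c with
  | nil => simp only [List.prod_nil, inv_one, one_mul, mul_one]; rfl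
  | cons x m ih =>
    have hconj : m.prod⁻¹ * (x⁻¹ * c * x) * m.prod = (x * m.prod)⁻¹ * c * (x * m.prod) := by
      group
    calc BraidEquiv (c :: x :: m) (x :: x⁻¹ * c * x :: m) := (pair_swap_conj c x).append_right m
      BraidEquiv _ _ := by simpa [hconj] using (ih (x⁻¹ * c * x)).cons x

theorem append_comm_of_prod_eq_one {m : List G} (hm : m.prod = 1) (p : List G) :
    BraidEquiv (p ++ m) (m ++ p) := by
  induction p with
  | nil => simp only [List.nil_append, List.append_nil]; rfl
  | cons c p ih =>
    have hpush : BraidEquiv (c :: m) (m ++ [c]) := by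
      simpa [hm] using cons_braidEquiv_append_conj c m
    calc BraidEquiv (c :: (p ++ m)) (c :: (m ++ p)) := ih.cons c
      BraidEquiv _ _ := by simpa using hpush.append_right p

theorem flatMap_of_perm {α : Type*} {f : α → List G} (hf : ∀ a, (f a).prod = 1)
    {l l' : List α} (h : l.Perm l') : BraidEquiv (l.flatMap f) (l'.flatMap f) := by
  induction h with
  | nil => rfl
  | cons a _ ih => simpa using ih.append_append (f a) []
  | swap a b l =>
    simpa using (append_comm_of_prod_eq_one (hf a) (f b)).append_right (l.flatMap f)
  | trans _ _ ih₁ ih₂ => exact ih₁.trans ih₂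

end BraidEquiv

section hmBracket

variable {G : Type*} [Group G]

theorem hmBracket_cons (a : G) (l : List G) :
    hmBracket (a :: l) = [a] ++ hmBracket l ++ [a⁻¹] := by
  simp [hmBracket]

theorem hmBracket_prod (l : List G) : (hmBracket l).prod = 1 := by
  rw [hmBracket, List.prod_append, List.map_reverse, ← List.prod_inv_reverse, mul_inv_cancel]

theorem hmBracket_braidEquiv_flatMap (l : List G) :
    BraidEquiv (hmBracket l) (l.flatMap fun a => [a, a⁻¹]) := by
  induction l with
  | nil => rfl
  | cons a l ih =>
    have hcomm := BraidEquiv.append_comm_of_prod_eq_one (hmBracket_prod l)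
    calc BraidEquiv (hmBracket (a :: l)) ([a] ++ ([a⁻¹] ++ hmBracket l)) := by
          rw [hmBracket_cons, List.append_assoc]
          simpa using (hcomm [a⁻¹]).symm.append_append [a] []
      BraidEquiv _ _ := by simpa using ih.append_append [a, a⁻¹] []

theorem hmBracket_braidEquiv_of_perm {l l' : List G} (h : l.Perm l') :
    BraidEquiv (hmBracket l) (hmBracket l') :=
  ((hmBracket_braidEquiv_flatMap l).trans
    (BraidEquiv.flatMap_of_perm (fun a => by simp) h)).trans
    (hmBracket_braidEquiv_flatMap l').symm

end hmBracket

/-- For any permutation `π` of `{1,…,u}`, the bracket tuple `[g_1,…,g_u]` is braid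
equivalent to `[g_{π(1)},…,g_{π(u)}]`. -/
theorem hmBracket_perm_braidEquiv {G : Type*} [Group G] {u : ℕ}
    (g : Fin u → G) (π : Equiv.Perm (Fin u)) :
    BraidEquiv (hmBracket (List.ofFn g)) (hmBracket (List.ofFn (fun i => g (π i)))) :=
  hmBracket_braidEquiv_of_perm (π.ofFn_comp_perm g).symm
end

section
/- Let s_1, s_2 be nonnegative integers. There exists an (s_1+s_2)-tuple of 3-cycles in the alternating group A_4 with product 1 whose entries generate A_4 and of which exactly s_1 entries are A_4-conjugate to (1 2 3) and exactly s_2 entries are A_4-conjugate to (1 3 2), if and only if s_1 ≡ s_2 (mod 3) and s_1 + s_2 ≥ 3. (Nonemptiness criterion for the Nielsen classes ni(A_4, C_{±3^{s_1,s_2}}).) -/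
/-- The 3-cycle `(1 2 3)` in `A_4` (0-indexed: `0 ↦ 1 ↦ 2 ↦ 0`). -/
def c123 : Equiv.Perm (Fin 4) := Equiv.swap 0 1 * Equiv.swap 1 2

/-- The 3-cycle `(1 3 4)` in `A_4` (0-indexed: `0 ↦ 2 ↦ 3 ↦ 0`). -/
def c134 : Equiv.Perm (Fin 4) := Equiv.swap 0 2 * Equiv.swap 2 3

/-- The 3-cycle `(1 4 2)` in `A_4` (0-indexed: `0 ↦ 3 ↦ 1 ↦ 0`). -/
def c142 : Equiv.Perm (Fin 4) := Equiv.swap 0 3 * Equiv.swap 3 1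

/-- `x` and `y` are conjugate by an element of the alternating group `A_4`. -/
def ConjA4 (x y : Equiv.Perm (Fin 4)) : Prop :=
  ∃ h ∈ alternatingGroup (Fin 4), h * x * h⁻¹ = y

open scoped Classical in
/-- The Nielsen class `ni(A_4, C_{±3^{s₁,s₂}})`: tuples of `s₁ + s₂` 3-cycles in `A_4`
with product 1 whose entries generate `A_4`, exactly `s₁` of which are `A_4`-conjugate
to `(1 2 3)` and exactly `s₂` of which are `A_4`-conjugate to `(1 3 2)`. -/
def NielsenPM (s₁ s₂ : ℕ) (l : List (Equiv.Perm (Fin 4))) : Prop :=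
  l.length = s₁ + s₂ ∧ (∀ σ ∈ l, σ.IsThreeCycle) ∧ l.prod = 1 ∧
    Subgroup.closure {σ | σ ∈ l} = alternatingGroup (Fin 4) ∧
    l.countP (fun σ => decide (ConjA4 c123 σ)) = s₁ ∧
    l.countP (fun σ => decide (ConjA4 c123⁻¹ σ)) = s₂

/-!
On `A_4`, sending the class of `(1 2 3)` to `1`, the class of `(1 3 2)` to `-1` and the Klein
four-group to `0` is the quotient map `A_4 → A_4 / V_4 ≅ ℤ/3`; applied to a tuple with product `1`
it gives `s₁ ≡ s₂ (mod 3)`. A tuple of length at most two with product `1` generates a cyclic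
group, which `A_4` is not, so `s₁ + s₂ ≥ 3`. Conversely, `(1 4 2)(1 3 4)(1 2 3) = 1`, the inverse
tuple and `(1 2 3), (1 3 2), (1 3 4), (1 4 3)` realise `(3, 0)`, `(0, 3)` and `(2, 2)`. Appending
`i` copies of `(1 2 3)` and `j` copies of `(1 3 2)` with `i ≡ j (mod 3)` keeps the product `1`
and the tuple generating, and reaches every admissible pair from one of these three.
-/

open Equiv Equiv.Perm Subgroup

instance {α : Type*} [Fintype α] [DecidableEq α] : DecidablePred (· ∈ alternatingGroup α) :=
  fun _ => decidable_of_iff _ mem_alternatingGroup.symm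

instance (x y : Perm (Fin 4)) : Decidable (ConjA4 x y) := by
  unfold ConjA4; infer_instance

theorem closure_le_zpowers_of_prod_eq_one {G : Type*} [Group G] {l : List G}
    (hprod : l.prod = 1) (hlen : l.length ≤ 2) : ∃ g : G, closure {x | x ∈ l} ≤ zpowers g := by
  match l, hprod, hlen with
  | [], _, _ => exact ⟨1, by simp⟩
  | [x], hx, _ => exact ⟨1, by simp_all⟩
  | [x, y], hxy, _ =>
    obtain rfl : y = x⁻¹ := eq_inv_of_mul_eq_one_right (by simpa using hxy)
    refine ⟨x, (closure_le _).2 fun z hz => ?_⟩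
    obtain rfl | rfl : z = x ∨ z = x⁻¹ := by simpa using hz
    exacts [mem_zpowers z, inv_mem (mem_zpowers _)]

theorem alternatingGroup_fin_four_not_le_zpowers (g : Perm (Fin 4)) :
    ¬ alternatingGroup (Fin 4) ≤ zpowers g := by
  intro h
  obtain ⟨i, hi⟩ := mem_zpowers_iff.1 (h (show c123 ∈ alternatingGroup (Fin 4) by decide))
  obtain ⟨j, hj⟩ := mem_zpowers_iff.1 (h (show c134 ∈ alternatingGroup (Fin 4) by decide))
  have hcomm : c123 * c134 = c134 * c123 := hi ▸ hj ▸ (Commute.zpow_zpow_self g i j).eq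
  exact absurd hcomm (by decide)

theorem closure_c123_c134 : closure {c123, c134} = alternatingGroup (Fin 4) := by
  have h123 : c123 ∈ closure {c123, c134} := subset_closure (by simp)
  have h134 : c134 ∈ closure {c123, c134} := subset_closure (by simp)
  refine le_antisymm ((closure_le _).2 ?_) ?_
  · simp only [Set.insert_subset_iff, Set.singleton_subset_iff, SetLike.mem_coe]
    decide
  have hcycles : ∀ σ : Perm (Fin 4), σ.support.card = 3 →
      ∃ τ ∈ [c123, c134, c123 * c134, c134 * c123], σ = τ ∨ σ = τ⁻¹ := by
    decide
  rw [← closure_three_cycles_eq_alternating, closure_le]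
  intro σ hσ
  obtain ⟨τ, hτ, hστ⟩ := hcycles σ (card_support_eq_three_iff.2 hσ)
  have hτK : τ ∈ closure {c123, c134} := by
    simp only [List.mem_cons, List.not_mem_nil, or_false] at hτ
    rcases hτ with rfl | rfl | rfl | rfl
    exacts [h123, h134, mul_mem h123 h134, mul_mem h134 h123]
  rcases hστ with rfl | rfl
  exacts [hτK, inv_mem hτK]

theorem alternatingGroup_le_closure_of_mem {l : List (Perm (Fin 4))}
    (h123 : c123 ∈ l ∨ c123⁻¹ ∈ l) (h134 : c134 ∈ l ∨ c134⁻¹ ∈ l) :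
    alternatingGroup (Fin 4) ≤ closure {σ | σ ∈ l} := by
  have key : ∀ τ, τ ∈ l ∨ τ⁻¹ ∈ l → τ ∈ closure {σ | σ ∈ l} := by
    rintro τ (h | h)
    · exact subset_closure h
    · exact inv_mem_iff.1 (subset_closure h)
  rw [← closure_c123_c134, closure_le, Set.insert_subset_iff, Set.singleton_subset_iff]
  exact ⟨key _ h123, key _ h134⟩

theorem List.prod_replicate_append_replicate_inv {G : Type*} [Group G] {g : G} {i j : ℕ}
    (h : i ≡ j [MOD orderOf g]) : (List.replicate i g ++ List.replicate j g⁻¹).prod = 1 := by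
  rw [List.prod_append, List.prod_replicate, List.prod_replicate, inv_pow,
    pow_eq_pow_iff_modEq.2 h, mul_inv_cancel]

def toZMod3 (σ : Perm (Fin 4)) : ZMod 3 :=
  (if ConjA4 c123 σ then 1 else 0) - (if ConjA4 c123⁻¹ σ then 1 else 0)

theorem toZMod3_mul : ∀ x ∈ alternatingGroup (Fin 4), ∀ y ∈ alternatingGroup (Fin 4),
    toZMod3 (x * y) = toZMod3 x + toZMod3 y := by
  decide

theorem toZMod3_list_prod {l : List (Perm (Fin 4))}
    (hl : ∀ σ ∈ l, σ ∈ alternatingGroup (Fin 4)) :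
    toZMod3 l.prod = l.countP (fun σ => decide (ConjA4 c123 σ)) -
      l.countP (fun σ => decide (ConjA4 c123⁻¹ σ)) := by
  induction l with
  | nil => decide
  | cons x t ih =>
    rw [List.forall_mem_cons] at hl
    rw [List.prod_cons, toZMod3_mul x hl.1 _ (list_prod_mem hl.2), ih hl.2, List.countP_cons,
      List.countP_cons]
    by_cases h₁ : ConjA4 c123 x <;> by_cases h₂ : ConjA4 c123⁻¹ x <;>
      simp only [toZMod3, h₁, h₂, decide_true, decide_false, if_true, if_false,
        Bool.false_eq_true, Nat.cast_add, Nat.cast_one] <;> ring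

theorem nielsenPM_iff {s₁ s₂ : ℕ} {l : List (Perm (Fin 4))} :
    NielsenPM s₁ s₂ l ↔ l.length = s₁ + s₂ ∧ (∀ σ ∈ l, σ.support.card = 3) ∧ l.prod = 1 ∧
      alternatingGroup (Fin 4) ≤ closure {σ | σ ∈ l} ∧
      l.countP (fun σ => decide (ConjA4 c123 σ)) = s₁ ∧
      l.countP (fun σ => decide (ConjA4 c123⁻¹ σ)) = s₂ := by
  simp only [NielsenPM, card_support_eq_three_iff]
  constructor
  · rintro ⟨hlen, h3, hprod, hgen, hc₁, hc₂⟩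
    refine ⟨hlen, h3, hprod, hgen.ge, ?_, ?_⟩
    · convert hc₁
    · convert hc₂
  · rintro ⟨hlen, h3, hprod, hgen, hc₁, hc₂⟩
    refine ⟨hlen, h3, hprod, le_antisymm ?_ hgen, ?_, ?_⟩
    · exact (closure_le _).2 fun σ hσ => (h3 σ hσ).mem_alternatingGroup
    · convert hc₁
    · convert hc₂

section NielsenPM

variable {s₁ s₂ : ℕ} {l : List (Perm (Fin 4))}

theorem NielsenPM.mod_three_eq (h : NielsenPM s₁ s₂ l) : s₁ % 3 = s₂ % 3 := by
  obtain ⟨-, h3, hprod, -, hc₁, hc₂⟩ := nielsenPM_iff.1 h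
  have hweight := toZMod3_list_prod fun σ hσ =>
    (card_support_eq_three_iff.1 (h3 σ hσ)).mem_alternatingGroup
  rw [hprod, hc₁, hc₂, show toZMod3 1 = 0 by decide, eq_comm, sub_eq_zero] at hweight
  exact (ZMod.natCast_eq_natCast_iff' _ _ _).1 hweight

theorem NielsenPM.three_le_add (h : NielsenPM s₁ s₂ l) : 3 ≤ s₁ + s₂ := by
  obtain ⟨hlen, -, hprod, hgen, -⟩ := nielsenPM_iff.1 h
  by_contra! hlt
  obtain ⟨g, hg⟩ := closure_le_zpowers_of_prod_eq_one hprod (by omega)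
  exact alternatingGroup_fin_four_not_le_zpowers g (hgen.trans hg)

theorem NielsenPM.append_replicate (h : NielsenPM s₁ s₂ l) {i j : ℕ} (hij : i % 3 = j % 3) :
    NielsenPM (s₁ + i) (s₂ + j) (l ++ (List.replicate i c123 ++ List.replicate j c123⁻¹)) := by
  obtain ⟨hlen, h3, hprod, hgen, hc₁, hc₂⟩ := nielsenPM_iff.1 h
  have horder : orderOf c123 = 3 := orderOf_eq_prime (by decide) (by decide)
  have hconj : ConjA4 c123 c123 ∧ ¬ ConjA4 c123 c123⁻¹ ∧ ¬ ConjA4 c123⁻¹ c123 ∧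
      ConjA4 c123⁻¹ c123⁻¹ := by
    decide
  refine nielsenPM_iff.2 ⟨?_, ?_, ?_, hgen.trans (closure_mono ?_), ?_, ?_⟩
  · simp only [List.length_append, List.length_replicate, hlen]
    omega
  · simp only [List.mem_append, List.mem_replicate]
    rintro σ (hσ | ⟨-, rfl⟩ | ⟨-, rfl⟩)
    exacts [h3 σ hσ, by decide, by decide]
  · rw [List.prod_append, hprod, one_mul, List.prod_replicate_append_replicate_inv]
    rwa [horder]
  · exact fun σ hσ => List.mem_append_left _ hσ
  · simp [List.countP_append, List.countP_replicate, hc₁, hconj]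
  · simp [List.countP_append, List.countP_replicate, hc₂, hconj]

theorem NielsenPM.exists_of_le {b₁ b₂ : ℕ} (h : NielsenPM b₁ b₂ l) (h₁ : b₁ ≤ s₁) (h₂ : b₂ ≤ s₂)
    (hmod : s₁ % 3 = s₂ % 3) : ∃ l', NielsenPM s₁ s₂ l' := by
  obtain ⟨i, rfl⟩ := Nat.exists_eq_add_of_le h₁
  obtain ⟨j, rfl⟩ := Nat.exists_eq_add_of_le h₂
  have hb := h.mod_three_eq
  exact ⟨_, h.append_replicate (by omega)⟩

end NielsenPM

theorem nielsenPM_three_zero : NielsenPM 3 0 [c142, c134, c123] :=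
  nielsenPM_iff.2 ⟨rfl, by decide, by decide,
    alternatingGroup_le_closure_of_mem (by decide) (by decide), by decide, by decide⟩

theorem nielsenPM_zero_three : NielsenPM 0 3 [c123⁻¹, c134⁻¹, c142⁻¹] :=
  nielsenPM_iff.2 ⟨rfl, by decide, by decide,
    alternatingGroup_le_closure_of_mem (by decide) (by decide), by decide, by decide⟩

theorem nielsenPM_two_two : NielsenPM 2 2 [c123, c123⁻¹, c134, c134⁻¹] :=
  nielsenPM_iff.2 ⟨rfl, by decide, by decide,
    alternatingGroup_le_closure_of_mem (by decide) (by decide), by decide, by decide⟩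

/-- **Nonemptiness criterion** for `ni(A_4, C_{±3^{s₁,s₂}})`: the Nielsen class is
nonempty iff `s₁ ≡ s₂ (mod 3)` and `s₁ + s₂ ≥ 3`. -/
theorem nielsenPM_nonempty_iff (s₁ s₂ : ℕ) :
    (∃ l : List (Equiv.Perm (Fin 4)), NielsenPM s₁ s₂ l) ↔
      (s₁ % 3 = s₂ % 3 ∧ 3 ≤ s₁ + s₂) := by
  refine ⟨fun ⟨l, hl⟩ => ⟨hl.mod_three_eq, hl.three_le_add⟩, fun ⟨hmod, hsum⟩ => ?_⟩
  rcases (by omega : 3 ≤ s₁ ∨ 3 ≤ s₂ ∨ (2 ≤ s₁ ∧ 2 ≤ s₂)) with h | h | ⟨h₁, h₂⟩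
  · exact nielsenPM_three_zero.exists_of_le h (Nat.zero_le _) hmod
  · exact nielsenPM_zero_three.exists_of_le (Nat.zero_le _) h hmod
  · exact nielsenPM_two_two.exists_of_le h₁ h₂ hmod
end

section
/- (Tail Lemma) Let n ≥ 5 and let n_1 satisfy 3 ≤ n_1 ≤ n−2. Let h_1 be a tuple of 3-cycles in A_n whose entries have supports contained in {1,…,n_1}, generate a subgroup acting transitively on {1,…,n_1}, and have product 1; let h_2 be a tuple of 3-cycles whose entries have supports contained in {1, n_1+1,…,n}, generate a subgroup acting transitively on {1, n_1+1,…,n}, and have product 1. Then the concatenated tuple (h_1, h_2, (1 n_1+1 n_1+2), (1 n_1+2 n_1+1)) is braid equivalent to (h_1, h_2, (1 2 3), (1 3 2)). -/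
/-- The 3-cycle `(x y z)` (sending `x ↦ y ↦ z ↦ x`) in `Perm (Fin n)`. -/
def cyc3 {n : ℕ} (x y z : Fin n) : Equiv.Perm (Fin n) :=
  Equiv.swap x y * Equiv.swap y z

namespace TailAux

variable {G : Type*} [Group G]

lemma be_refl (l : List G) : BraidEquiv l l := Relation.EqvGen.refl l

lemma be_symm {l m : List G} (h : BraidEquiv l m) : BraidEquiv m l := Relation.EqvGen.symm _ _ h

lemma be_trans {l m k : List G} (h : BraidEquiv l m) (h' : BraidEquiv m k) : BraidEquiv l k :=
  Relation.EqvGen.trans _ _ _ h h'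

lemma be_move (l₁ l₂ : List G) (a b : G) :
    BraidEquiv (l₁ ++ a :: b :: l₂) (l₁ ++ (a * b * a⁻¹) :: a :: l₂) :=
  Relation.EqvGen.rel _ _ ⟨l₁, l₂, a, b, rfl, rfl⟩

/-- local pair move: `a` crosses the pair to the right, conjugating it. -/
lemma be_pair (l₁ l₂ : List G) (a h k : G) :
    BraidEquiv (l₁ ++ a :: h :: k :: l₂) (l₁ ++ (a*h*a⁻¹) :: (a*k*a⁻¹) :: a :: l₂) := by
  have m1 := be_move l₁ (k :: l₂) a h
  have m2 := be_move (l₁ ++ [a*h*a⁻¹]) l₂ a k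
  simp only [List.append_assoc, List.cons_append, List.nil_append] at m2
  exact be_trans m1 m2

/-- an element crosses an adjacent inverse pair to the left, without conjugation. -/
lemma be_cross (l₁ l₂ : List G) (h x : G) :
    BraidEquiv (l₁ ++ h :: h⁻¹ :: x :: l₂) (l₁ ++ x :: h :: h⁻¹ :: l₂) := by
  have m1 := be_move (l₁ ++ [h]) l₂ h⁻¹ x
  simp only [List.append_assoc, List.cons_append, List.nil_append] at m1
  simp only [inv_inv] at m1
  have m2 := be_move l₁ (h⁻¹ :: l₂) h (h⁻¹*x*h)
  have e : h * (h⁻¹*x*h) * h⁻¹ = x := by group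
  rw [e] at m2
  exact be_trans m1 m2

/-- slide an inverse pair from the right end across `l₂`. -/
lemma be_slide (l₂ : List G) : ∀ (l₁ : List G) (g : G),
    BraidEquiv (l₁ ++ (l₂ ++ [g, g⁻¹]))
      (l₁ ++ (l₂.prod * g * l₂.prod⁻¹) :: (l₂.prod * g * l₂.prod⁻¹)⁻¹ :: l₂) := by
  induction l₂ with
  | nil => intro l₁ g; simp only [List.nil_append, List.prod_nil, one_mul, mul_inv_rev,
      inv_one, mul_one, List.append_nil]; exact be_refl _
  | cons a t ih =>
    intro l₁ g
    have h1 : BraidEquiv (l₁ ++ (a :: t ++ [g, g⁻¹]))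
        (l₁ ++ a :: (t.prod * g * t.prod⁻¹) :: (t.prod * g * t.prod⁻¹)⁻¹ :: t) := by
      have := ih (l₁ ++ [a]) g
      simpa only [List.append_assoc, List.cons_append, List.nil_append] using this
    have h2 := be_pair l₁ t a (t.prod * g * t.prod⁻¹) (t.prod * g * t.prod⁻¹)⁻¹
    have e1 : a * (t.prod * g * t.prod⁻¹) * a⁻¹ = (a :: t).prod * g * ((a :: t).prod)⁻¹ := by
      rw [List.prod_cons]; group
    have e2 : a * (t.prod * g * t.prod⁻¹)⁻¹ * a⁻¹ = ((a :: t).prod * g * ((a :: t).prod)⁻¹)⁻¹ := by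
      rw [List.prod_cons]; group
    rw [e1, e2] at h2
    exact be_trans h1 h2

def conjSet (l : List G) : Subgroup G where
  carrier := {τ | ∀ g : G, BraidEquiv (l ++ [g, g⁻¹]) (l ++ [τ*g*τ⁻¹, (τ*g*τ⁻¹)⁻¹])}
  one_mem' := by
    intro g
    simp only [one_mul, inv_one, mul_one]
    exact be_refl _
  mul_mem' := by
    intro a b ha hb g
    refine be_trans (hb g) ?_
    have := ha (b*g*b⁻¹)
    have e : (b*g*b⁻¹)⁻¹ = b*g⁻¹*b⁻¹ := by group
    have e2 : a*(b*g*b⁻¹)*a⁻¹ = (a*b)*g*(a*b)⁻¹ := by group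
    rw [e2] at this
    -- this : BraidEquiv (l ++ [b*g*b⁻¹, (b*g*b⁻¹)⁻¹]) (l ++ [(a*b)*g*(a*b)⁻¹, _])
    exact this
  inv_mem' := by
    intro a ha g
    have := ha (a⁻¹*g*a)
    have e : a*(a⁻¹*g*a)*a⁻¹ = g := by group
    rw [e] at this
    have e2 : a⁻¹*g*(a⁻¹)⁻¹ = a⁻¹*g*a := by group
    rw [e2]
    exact be_symm this

lemma mem_conjSet_iff {l : List G} {τ : G} :
    τ ∈ conjSet l ↔ ∀ g : G, BraidEquiv (l ++ [g, g⁻¹]) (l ++ [τ*g*τ⁻¹, (τ*g*τ⁻¹)⁻¹]) :=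
  Iff.rfl

lemma split_mem_conjSet (u t : List G) (a : G) :
    t.prod⁻¹ * a * t.prod ∈ conjSet (u ++ a :: t) := by
  rw [mem_conjSet_iff]
  intro g
  set tp := t.prod with htp
  -- step 1 : slide pair left across t
  have s1 : BraidEquiv ((u ++ a :: t) ++ [g, g⁻¹])
      (u ++ a :: (tp*g*tp⁻¹) :: (tp*g*tp⁻¹)⁻¹ :: t) := by
    have := be_slide t (u ++ [a]) g
    simpa only [List.append_assoc, List.cons_append, List.nil_append] using this
  -- step 2 : a crosses the pair rightwards conjugating it
  have s2 : BraidEquiv (u ++ a :: (tp*g*tp⁻¹) :: (tp*g*tp⁻¹)⁻¹ :: t)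
      (u ++ (a*(tp*g*tp⁻¹)*a⁻¹) :: (a*(tp*g*tp⁻¹)*a⁻¹)⁻¹ :: a :: t) := by
    have h2 := be_pair u t a (tp*g*tp⁻¹) (tp*g*tp⁻¹)⁻¹
    have e : a*(tp*g*tp⁻¹)⁻¹*a⁻¹ = (a*(tp*g*tp⁻¹)*a⁻¹)⁻¹ := by group
    rw [e] at h2
    exact h2
  -- step 3 : pair crosses a leftwards without conjugation
  have s3 := be_cross u t (a*(tp*g*tp⁻¹)*a⁻¹) a
  -- step 4 : slide the pair back to the right end
  have s4 : BraidEquiv (u ++ a :: (a*(tp*g*tp⁻¹)*a⁻¹) :: (a*(tp*g*tp⁻¹)*a⁻¹)⁻¹ :: t)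
      ((u ++ a :: t) ++ [(tp⁻¹*a*tp)*g*(tp⁻¹*a*tp)⁻¹, ((tp⁻¹*a*tp)*g*(tp⁻¹*a*tp)⁻¹)⁻¹]) := by
    have := be_slide t (u ++ [a]) ((tp⁻¹*a*tp)*g*(tp⁻¹*a*tp)⁻¹)
    have e : tp * ((tp⁻¹*a*tp)*g*(tp⁻¹*a*tp)⁻¹) * tp⁻¹ = a*(tp*g*tp⁻¹)*a⁻¹ := by group
    rw [e] at this
    exact be_symm (by simpa only [List.append_assoc, List.cons_append, List.nil_append] using this)
  exact be_trans (be_trans (be_trans s1 s2) s3) s4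

lemma entries_mem_conjSet (l : List G) (hl : l.prod = 1) : ∀ a ∈ l, a ∈ conjSet l := by
  suffices h : ∀ k (u t : List G) (a : G), u.length ≤ k → l = u ++ a :: t → a ∈ conjSet l by
    intro a ha
    obtain ⟨u, t, rfl⟩ := List.append_of_mem ha
    exact h u.length u t a le_rfl rfl
  intro k
  induction k with
  | zero =>
    intro u t a hu hsplit
    have hu0 : u = [] := List.eq_nil_of_length_eq_zero (Nat.le_zero.mp hu)
    subst hu0
    have h0 := split_mem_conjSet ([] : List G) t a
    rw [← hsplit] at h0
    have ht : t.prod = a⁻¹ := by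
      rw [hsplit] at hl
      simp only [List.nil_append, List.prod_cons] at hl
      exact eq_inv_of_mul_eq_one_right hl
    rw [ht] at h0
    simpa using h0
  | succ k ih =>
    intro u t a hu hsplit
    -- every element of u is in conjSet l
    have humem : ∀ b ∈ u, b ∈ conjSet l := by
      intro b hb
      obtain ⟨u₁, u₂, rfl⟩ := List.append_of_mem hb
      have : l = u₁ ++ b :: (u₂ ++ a :: t) := by rw [hsplit]; simp
      refine ih u₁ (u₂ ++ a :: t) b ?_ this
      have : u₁.length < (u₁ ++ b :: u₂).length := by simp
      omega
    have hup : u.prod ∈ conjSet l := Subgroup.list_prod_mem _ humem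
    have hsp : t.prod⁻¹ * a * t.prod ∈ conjSet l := by rw [hsplit]; exact split_mem_conjSet u t a
    have ht : t.prod = (u.prod * a)⁻¹ := by
      rw [hsplit] at hl
      simp only [List.prod_append, List.prod_cons] at hl
      rw [← mul_assoc] at hl
      exact eq_inv_of_mul_eq_one_right hl
    have : t.prod⁻¹ * a * t.prod = u.prod * a * u.prod⁻¹ := by rw [ht]; group
    rw [this] at hsp
    have := mul_mem (mul_mem (inv_mem hup) hsp) hup
    simpa [mul_assoc] using this

lemma braid_conj (l : List G) (hl : l.prod = 1) {σ : G}
    (hσ : σ ∈ Subgroup.closure {τ | τ ∈ l}) (g : G) :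
    BraidEquiv (l ++ [g, g⁻¹]) (l ++ [σ*g*σ⁻¹, (σ*g*σ⁻¹)⁻¹]) := by
  have hle : Subgroup.closure {τ | τ ∈ l} ≤ conjSet l :=
    (Subgroup.closure_le _).2 (fun a ha => entries_mem_conjSet l hl a ha)
  exact (hle hσ) g



open Equiv Equiv.Perm

variable {n : ℕ}

lemma cyc3_fst {x y z : Fin n} (hxy : x ≠ y) (hxz : x ≠ z) : cyc3 x y z x = y := by
  simp [cyc3, Equiv.Perm.mul_apply, Equiv.swap_apply_of_ne_of_ne hxy hxz]

lemma cyc3_snd {x y z : Fin n} (hxz : x ≠ z) (hyz : y ≠ z) : cyc3 x y z y = z := by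
  simp [cyc3, Equiv.Perm.mul_apply, Equiv.swap_apply_of_ne_of_ne hxz.symm hyz.symm]

lemma cyc3_trd {x y z : Fin n} : cyc3 x y z z = x := by
  simp [cyc3, Equiv.Perm.mul_apply]

lemma cyc3_other {x y z w : Fin n} (hx : w ≠ x) (hy : w ≠ y) (hz : w ≠ z) :
    cyc3 x y z w = w := by
  simp [cyc3, Equiv.Perm.mul_apply, Equiv.swap_apply_of_ne_of_ne hy hz,
    Equiv.swap_apply_of_ne_of_ne hx hy]

lemma cyc3_rot {x y z : Fin n} (hxy : x ≠ y) (hxz : x ≠ z) (hyz : y ≠ z) :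
    cyc3 x y z = cyc3 y z x := by
  apply Equiv.ext
  intro w
  rcases eq_or_ne w x with rfl | hwx
  · rw [cyc3_fst hxy hxz, cyc3_trd]
  rcases eq_or_ne w y with rfl | hwy
  · rw [cyc3_snd hxz hyz, cyc3_fst hyz (Ne.symm hxy)]
  rcases eq_or_ne w z with rfl | hwz
  · rw [cyc3_trd, cyc3_snd (Ne.symm hxy) (Ne.symm hxz)]
  · rw [cyc3_other hwx hwy hwz, cyc3_other hwy hwz hwx]

lemma cyc3_inv {x y z : Fin n} (hxy : x ≠ y) (hxz : x ≠ z) (hyz : y ≠ z) :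
    (cyc3 x y z)⁻¹ = cyc3 x z y := by
  rw [eq_comm, eq_inv_iff_mul_eq_one]
  apply Equiv.ext
  intro w
  simp only [Equiv.Perm.mul_apply, Equiv.Perm.one_apply]
  rcases eq_or_ne w x with rfl | hwx
  · rw [cyc3_fst hxy hxz, cyc3_trd]
  rcases eq_or_ne w y with rfl | hwy
  · rw [cyc3_snd hxz hyz, cyc3_snd hxy hyz.symm]
  rcases eq_or_ne w z with rfl | hwz
  · rw [cyc3_trd, cyc3_fst hxz hxy]
  · rw [cyc3_other hwx hwy hwz, cyc3_other hwx hwz hwy]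

lemma cyc3_conj (σ : Equiv.Perm (Fin n)) (x y z : Fin n) :
    σ * cyc3 x y z * σ⁻¹ = cyc3 (σ x) (σ y) (σ z) := by
  unfold cyc3
  rw [Equiv.swap_apply_apply, Equiv.swap_apply_apply]
  group


/-- every 3-cycle is a `cyc3` of its (moved) support points. -/
lemma isThreeCycle_cyc3 {σ : Equiv.Perm (Fin n)} (h : σ.IsThreeCycle) :
    ∃ a b c : Fin n, a ≠ b ∧ a ≠ c ∧ b ≠ c ∧ σ = cyc3 a b c ∧
      σ a ≠ a ∧ σ b ≠ b ∧ σ c ≠ c := by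
  have hcard := h.card_support
  have hne : σ.support.Nonempty := by
    rw [← Finset.card_pos, hcard]; norm_num
  obtain ⟨a, ha⟩ := hne
  set b := σ a with hb
  set c := σ b with hc
  have hpow : σ ^ 3 = 1 := by
    rw [← h.orderOf]; exact pow_orderOf_eq_one σ
  have hca : σ c = a := by
    have := Equiv.ext_iff.mp hpow a
    simp only [pow_succ, pow_zero, one_mul, Equiv.Perm.mul_apply, Equiv.Perm.one_apply] at this
    exact this
  have hab : a ≠ b := (Equiv.Perm.mem_support.mp ha).symm
  have hbsup : b ∈ σ.support := Equiv.Perm.apply_mem_support.mpr ha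
  have hbc : b ≠ c := (Equiv.Perm.mem_support.mp hbsup).symm
  have hac : a ≠ c := by
    intro e
    exact (Equiv.Perm.mem_support.mp ha) (by rw [e, hca, e])
  have hcsup : c ∈ σ.support := Equiv.Perm.apply_mem_support.mpr hbsup
  have hsupp : ({a, b, c} : Finset (Fin n)) = σ.support := by
    apply Finset.eq_of_subset_of_card_le
    · intro w hw
      simp only [Finset.mem_insert, Finset.mem_singleton] at hw
      rcases hw with rfl | rfl | rfl <;> assumption
    · rw [hcard]
      rw [Finset.card_insert_of_notMem (by simp [hab, hac]),
        Finset.card_insert_of_notMem (by simp [hbc]), Finset.card_singleton]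
  refine ⟨a, b, c, hab, hac, hbc, ?_, ?_, ?_, ?_⟩
  · apply Equiv.ext
    intro w
    rcases eq_or_ne w a with rfl | hwa
    · rw [cyc3_fst hab hac, hb]
    rcases eq_or_ne w b with rfl | hwb
    · rw [cyc3_snd hac hbc, hc]
    rcases eq_or_ne w c with rfl | hwc
    · rw [cyc3_trd, hca]
    · rw [cyc3_other hwa hwb hwc]
      have : w ∉ σ.support := by
        rw [← hsupp]; simp [hwa, hwb, hwc]
      exact Equiv.Perm.notMem_support.mp this
  · exact Equiv.Perm.mem_support.mp ha
  · exact Equiv.Perm.mem_support.mp hbsup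
  · exact Equiv.Perm.mem_support.mp hcsup

variable {H : Subgroup (Equiv.Perm (Fin n))}

/-- all 3-cycles with support in `Δ` belong to `H`. -/
def AllCyc (H : Subgroup (Equiv.Perm (Fin n))) (Δ : Finset (Fin n)) : Prop :=
  ∀ x ∈ Δ, ∀ y ∈ Δ, ∀ z ∈ Δ, x ≠ y → x ≠ z → y ≠ z → cyc3 x y z ∈ H

lemma allCyc_triple {a b c : Fin n} (hab : a ≠ b) (hac : a ≠ c) (hbc : b ≠ c)
    (h : cyc3 a b c ∈ H) : AllCyc H {a, b, c} := by
  have h1 : cyc3 a b c ∈ H := h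
  have h2 : cyc3 b c a ∈ H := by rwa [← cyc3_rot hab hac hbc]
  have h3 : cyc3 c a b ∈ H := by rwa [← cyc3_rot hbc hab.symm hac.symm]
  have h4 : cyc3 a c b ∈ H := by
    rw [← cyc3_inv hab hac hbc]; exact inv_mem h
  have h5 : cyc3 c b a ∈ H := by rwa [← cyc3_rot hac hab hbc.symm]
  have h6 : cyc3 b a c ∈ H := by rwa [← cyc3_rot hbc.symm hac.symm hab.symm]
  intro x hx y hy z hz hxy hxz hyz
  simp only [Finset.mem_insert, Finset.mem_singleton] at hx hy hz
  rcases hx with rfl | rfl | rfl <;> rcases hy with rfl | rfl | rfl <;>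
    rcases hz with rfl | rfl | rfl <;>
    first
      | exact absurd rfl hxy
      | exact absurd rfl hxz
      | exact absurd rfl hyz
      | exact h1 | exact h2 | exact h3 | exact h4 | exact h5 | exact h6

/-- move a point to another by a 3-cycle inside `Δ`, fixing a given finset `F`. -/
lemma move_pt (hg : AllCyc H Δ) {u x : Fin n} (hu : u ∈ Δ) (hx : x ∈ Δ)
    (F : Finset (Fin n)) (hFu : u ∉ F) (hFx : x ∉ F)
    (hcard : F.card + 3 ≤ Δ.card) :
    ∃ δ : Equiv.Perm (Fin n), δ ∈ H ∧ δ u = x ∧ (∀ w ∈ F, δ w = w) ∧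
      (∀ w, w ∉ Δ → δ w = w) ∧ (∀ w ∈ Δ, δ w ∈ Δ) := by
  rcases eq_or_ne u x with rfl | hux
  · exact ⟨1, one_mem _, rfl, fun w _ => rfl, fun w _ => rfl, fun w hw => hw⟩
  have hzex : (Δ \ (insert u (insert x F))).Nonempty := by
    rw [← Finset.card_pos]
    have h1 : (insert u (insert x F)).card ≤ F.card + 2 := by
      calc (insert u (insert x F)).card ≤ (insert x F).card + 1 := Finset.card_insert_le _ _
        _ ≤ F.card + 1 + 1 := by
            have := Finset.card_insert_le x F; omega
        _ = F.card + 2 := by omega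
    have h2 := Finset.card_le_card_sdiff_add_card (s := Δ) (t := insert u (insert x F))
    omega
  obtain ⟨z, hz⟩ := hzex
  rw [Finset.mem_sdiff] at hz
  obtain ⟨hzΔ, hznot⟩ := hz
  simp only [Finset.mem_insert, not_or] at hznot
  obtain ⟨hzu, hzx, hzF⟩ := hznot
  refine ⟨cyc3 u x z, hg u hu x hx z hzΔ hux (Ne.symm hzu) (Ne.symm hzx), cyc3_fst hux (Ne.symm hzu), ?_, ?_, ?_⟩
  · intro w hw
    exact cyc3_other (fun e => hFu (e ▸ hw)) (fun e => hFx (e ▸ hw)) (fun e => hzF (e ▸ hw))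
  · intro w hw
    exact cyc3_other (fun e => hw (e ▸ hu)) (fun e => hw (e ▸ hx)) (fun e => hw (e ▸ hzΔ))
  · intro w hw
    rcases eq_or_ne w u with rfl | h1
    · rw [cyc3_fst hux (Ne.symm hzu)]; exact hx
    rcases eq_or_ne w x with rfl | h2
    · rw [cyc3_snd (Ne.symm hzu) (Ne.symm hzx)]; exact hzΔ
    rcases eq_or_ne w z with rfl | h3
    · rw [cyc3_trd]; exact hu
    · rw [cyc3_other h1 h2 h3]; exact hw


lemma twoTrans {Δ : Finset (Fin n)} (hg : AllCyc H Δ) (hcard : 3 ≤ Δ.card)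
    {u v x y : Fin n} (hu : u ∈ Δ) (hv : v ∈ Δ) (hx : x ∈ Δ) (hy : y ∈ Δ)
    (huv : u ≠ v) (hxy : x ≠ y) :
    ∃ δ : Equiv.Perm (Fin n), δ ∈ H ∧
      ((δ u = x ∧ δ v = y) ∨ (δ u = y ∧ δ v = x)) ∧ (∀ w, w ∉ Δ → δ w = w) := by
  obtain ⟨δ₁, hδ₁H, hδ₁u, -, hδ₁out, hδ₁Δ⟩ :=
    move_pt hg hu hx (∅ : Finset (Fin n)) (by simp) (by simp) (by simpa using hcard)
  set v₁ := δ₁ v with hv₁def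
  have hv₁Δ : v₁ ∈ Δ := hδ₁Δ v hv
  have hv₁x : v₁ ≠ x := by
    intro e
    rw [← hδ₁u] at e
    exact huv (δ₁.injective e).symm
  rcases eq_or_ne v₁ y with hvy | hvy
  · exact ⟨δ₁, hδ₁H, Or.inl ⟨hδ₁u, hvy⟩, hδ₁out⟩
  rcases (Δ \ ({v₁, y, x} : Finset (Fin n))).eq_empty_or_nonempty with hemp | ⟨z, hz⟩
  · -- Δ ⊆ {v₁, y, x}; use the reversed pair
    have hyv₁ : y ≠ v₁ := Ne.symm hvy
    have hxv₁ : x ≠ v₁ := Ne.symm hv₁x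
    have hmem : cyc3 x y v₁ ∈ H := hg x hx y hy v₁ hv₁Δ hxy hxv₁ hyv₁
    refine ⟨cyc3 x y v₁ * δ₁, mul_mem hmem hδ₁H, Or.inr ⟨?_, ?_⟩, ?_⟩
    · rw [Equiv.Perm.mul_apply, hδ₁u, cyc3_fst hxy hxv₁]
    · rw [Equiv.Perm.mul_apply, ← hv₁def, cyc3_trd]
    · intro w hw
      rw [Equiv.Perm.mul_apply, hδ₁out w hw]
      exact cyc3_other (fun e => hw (e ▸ hx)) (fun e => hw (e ▸ hy)) (fun e => hw (e ▸ hv₁Δ))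
  · rw [Finset.mem_sdiff] at hz
    obtain ⟨hzΔ, hznot⟩ := hz
    simp only [Finset.mem_insert, Finset.mem_singleton, not_or] at hznot
    obtain ⟨hzv₁, hzy, hzx⟩ := hznot
    have hmem : cyc3 v₁ y z ∈ H := hg v₁ hv₁Δ y hy z hzΔ hvy (Ne.symm hzv₁) (Ne.symm hzy)
    refine ⟨cyc3 v₁ y z * δ₁, mul_mem hmem hδ₁H, Or.inl ⟨?_, ?_⟩, ?_⟩
    · rw [Equiv.Perm.mul_apply, hδ₁u]
      exact cyc3_other hv₁x.symm hxy (Ne.symm hzx)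
    · rw [Equiv.Perm.mul_apply, ← hv₁def, cyc3_fst hvy (Ne.symm hzv₁)]
    · intro w hw
      rw [Equiv.Perm.mul_apply, hδ₁out w hw]
      exact cyc3_other (fun e => hw (e ▸ hv₁Δ)) (fun e => hw (e ▸ hy)) (fun e => hw (e ▸ hzΔ))

/-- two old points and one new point: the new 3-cycle is in `H`. -/
lemma cyc_two_in {Δ : Finset (Fin n)} (hg : AllCyc H Δ) (hcard : 3 ≤ Δ.card)
    {u v p : Fin n} (hu : u ∈ Δ) (hv : v ∈ Δ) (hp : p ∉ Δ) (huv : u ≠ v)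
    (hc : cyc3 u v p ∈ H) {x y : Fin n} (hx : x ∈ Δ) (hy : y ∈ Δ) (hxy : x ≠ y) :
    cyc3 x y p ∈ H := by
  obtain ⟨δ, hδH, hor, hout⟩ := twoTrans hg hcard hu hv hx hy huv hxy
  have hδp : δ p = p := hout p hp
  have hconj : δ * cyc3 u v p * δ⁻¹ = cyc3 (δ u) (δ v) p := by
    rw [cyc3_conj, hδp]
  have hmem : cyc3 (δ u) (δ v) p ∈ H := by
    rw [← hconj]; exact mul_mem (mul_mem hδH hc) (inv_mem hδH)
  have hup : x ≠ p := fun e => hp (e ▸ hx)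
  have hvp : y ≠ p := fun e => hp (e ▸ hy)
  rcases hor with ⟨e1, e2⟩ | ⟨e1, e2⟩
  · rwa [e1, e2] at hmem
  · rw [e1, e2] at hmem
    -- hmem : cyc3 y x p ∈ H ; target is its inverse
    have : (cyc3 y x p)⁻¹ = cyc3 x y p := by
      rw [cyc3_inv hxy.symm hvp hup]
      rw [cyc3_rot hvp hxy.symm hup.symm]
      rw [cyc3_rot hup.symm hvp.symm hxy]
    rw [← this]
    exact inv_mem hmem

lemma allCyc_insert {Δ : Finset (Fin n)} (hg : AllCyc H Δ) (hcard : 3 ≤ Δ.card)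
    {u v p : Fin n} (hu : u ∈ Δ) (hv : v ∈ Δ) (hp : p ∉ Δ) (huv : u ≠ v)
    (hc : cyc3 u v p ∈ H) : AllCyc H (insert p Δ) := by
  intro x hx y hy z hz hxy hxz hyz
  rw [Finset.mem_insert] at hx hy hz
  have hxp : x ≠ p → x ∈ Δ := fun h => hx.resolve_left h
  rcases hx with rfl | hx
  · -- x = p
    have hy' : y ∈ Δ := hy.resolve_left (Ne.symm hxy)
    have hz' : z ∈ Δ := hz.resolve_left (Ne.symm hxz)
    have := cyc_two_in hg hcard hu hv hp huv hc hy' hz' hyz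
    rwa [cyc3_rot hxy hxz hyz]
  rcases hy with rfl | hy
  · have hz' : z ∈ Δ := hz.resolve_left (Ne.symm hyz)
    have := cyc_two_in hg hcard hu hv hp huv hc hz' hx (Ne.symm hxz)
    rwa [cyc3_rot hxz.symm hyz.symm hxy] at this
  rcases hz with rfl | hz
  · exact cyc_two_in hg hcard hu hv hp huv hc hx hy hxy
  · exact hg x hx y hy z hz hxy hxz hyz

/-- absorb the support of a 3-cycle overlapping `Δ` at its first point. -/
lemma allCyc_absorb {Δ : Finset (Fin n)} (hg : AllCyc H Δ) (hcard : 3 ≤ Δ.card)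
    {a b c : Fin n} (hab : a ≠ b) (hac : a ≠ c) (hbc : b ≠ c)
    (ha : a ∈ Δ) (hc3 : cyc3 a b c ∈ H) :
    ∃ Δ' : Finset (Fin n), AllCyc H Δ' ∧ Δ ⊆ Δ' ∧ b ∈ Δ' ∧ c ∈ Δ' ∧
      Δ' ⊆ Δ ∪ {a, b, c} := by
  by_cases hb : b ∈ Δ
  · by_cases hcm : c ∈ Δ
    · exact ⟨Δ, hg, le_refl _, hb, hcm, Finset.subset_union_left⟩
    · refine ⟨insert c Δ, allCyc_insert hg hcard ha hb hcm hab hc3, Finset.subset_insert _ _,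
        Finset.mem_insert_of_mem hb, Finset.mem_insert_self _ _, ?_⟩
      intro w hw
      rw [Finset.mem_insert] at hw
      rcases hw with rfl | hw
      · simp
      · exact Finset.mem_union_left _ hw
  · by_cases hcm : c ∈ Δ
    · -- c ∈ Δ, b ∉ Δ; use cyc3 c a b
      have hc3' : cyc3 c a b ∈ H := by rwa [cyc3_rot hab hac hbc, cyc3_rot hbc hab.symm hac.symm] at hc3
      refine ⟨insert b Δ, allCyc_insert hg hcard hcm ha hb hac.symm hc3', Finset.subset_insert _ _,
        Finset.mem_insert_self _ _, Finset.mem_insert_of_mem hcm, ?_⟩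
      intro w hw
      rw [Finset.mem_insert] at hw
      rcases hw with rfl | hw
      · simp
      · exact Finset.mem_union_left _ hw
    · -- b ∉ Δ, c ∉ Δ : first add c, then b
      obtain ⟨x, hxmem, y, hymem, hxy⟩ := Finset.one_lt_card.mp
        (by
          have : 2 ≤ (Δ.erase a).card := by
            have := Finset.card_erase_of_mem ha
            omega
          omega : 1 < (Δ.erase a).card)
      have hxΔ : x ∈ Δ := Finset.mem_of_mem_erase hxmem
      have hyΔ : y ∈ Δ := Finset.mem_of_mem_erase hymem
      have hxa : x ≠ a := Finset.ne_of_mem_erase hxmem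
      have hya : y ≠ a := Finset.ne_of_mem_erase hymem
      have hd : cyc3 a x y ∈ H := hg a ha x hxΔ y hyΔ (Ne.symm hxa) (Ne.symm hya) hxy
      have hxb : x ≠ b := fun e => hb (e ▸ hxΔ)
      have hxc : x ≠ c := fun e => hcm (e ▸ hxΔ)
      have hyb : y ≠ b := fun e => hb (e ▸ hyΔ)
      have hyc : y ≠ c := fun e => hcm (e ▸ hyΔ)
      -- conjugate by (cyc3 a b c)⁻¹ = cyc3 a c b, sending a ↦ c, fixing x, y
      have hco : (cyc3 a b c)⁻¹ * cyc3 a x y * ((cyc3 a b c)⁻¹)⁻¹ = cyc3 c x y := by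
        rw [cyc3_inv hab hac hbc, cyc3_conj, cyc3_fst hac hab,
          cyc3_other hxa hxc hxb, cyc3_other hya hyc hyb]
      have he : cyc3 c x y ∈ H := by
        rw [← hco]; exact mul_mem (mul_mem (inv_mem hc3) hd) (inv_mem (inv_mem hc3))
      have he' : cyc3 x y c ∈ H := by
        rwa [cyc3_rot (Ne.symm hxc) (Ne.symm hyc) hxy] at he
      have hg2 : AllCyc H (insert c Δ) := allCyc_insert hg hcard hxΔ hyΔ hcm hxy he'
      have hbin : b ∉ insert c Δ := by simp [hb, hbc]
      have hc3' : cyc3 c a b ∈ H := by rwa [cyc3_rot hab hac hbc, cyc3_rot hbc hab.symm hac.symm] at hc3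
      have hg3 : AllCyc H (insert b (insert c Δ)) :=
        allCyc_insert hg2 (le_trans hcard (Finset.card_le_card (Finset.subset_insert _ _)))
          (Finset.mem_insert_self _ _) (Finset.mem_insert_of_mem ha) hbin hac.symm hc3'
      refine ⟨insert b (insert c Δ), hg3, ?_, Finset.mem_insert_self _ _,
        Finset.mem_insert_of_mem (Finset.mem_insert_self _ _), ?_⟩
      · exact le_trans (Finset.subset_insert _ _) (Finset.subset_insert _ _)
      · intro w hw
        simp only [Finset.mem_insert] at hw
        rcases hw with rfl | rfl | hw
        · simp
        · simp
        · exact Finset.mem_union_left _ hw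


/-- the subgroup of permutations preserving a finset. -/
def presSub (Δ : Finset (Fin n)) : Subgroup (Equiv.Perm (Fin n)) where
  carrier := {σ | ∀ w ∈ Δ, σ w ∈ Δ}
  one_mem' := fun w hw => hw
  mul_mem' := by
    intro a b ha hb w hw
    exact ha _ (hb _ hw)
  inv_mem' := by
    intro a ha w hw
    have himg : Δ.image a = Δ := by
      apply Finset.eq_of_subset_of_card_le
      · intro z hz
        rw [Finset.mem_image] at hz
        obtain ⟨z', hz', rfl⟩ := hz
        exact ha _ hz'
      · rw [Finset.card_image_of_injective _ a.injective]
    rw [← himg, Finset.mem_image] at hw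
    obtain ⟨w', hw', he⟩ := hw
    have : a⁻¹ w = w' := by rw [← he]; simp
    rw [this]; exact hw'

lemma mem_presSub_iff {Δ : Finset (Fin n)} {σ : Equiv.Perm (Fin n)} :
    σ ∈ presSub Δ ↔ ∀ w ∈ Δ, σ w ∈ Δ := Iff.rfl

/-- growth lemma: enlarge a good finset to cover an orbit `O`. -/
lemma grow {hl : List (Equiv.Perm (Fin n))} {O : Finset (Fin n)}
    (hcl : ∀ c ∈ hl, c ∈ H)
    (htrans : ∀ x ∈ O, ∀ y ∈ O, ∃ σ ∈ Subgroup.closure {τ | τ ∈ hl}, σ x = y)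
    (h3c : ∀ c ∈ hl, ∃ a b c' : Fin n, a ≠ b ∧ a ≠ c' ∧ b ≠ c' ∧ c = cyc3 a b c' ∧
      a ∈ O ∧ b ∈ O ∧ c' ∈ O) :
    ∀ k (Δ : Finset (Fin n)), (O \ Δ).card ≤ k → AllCyc H Δ → 3 ≤ Δ.card →
      (Δ ∩ O).Nonempty →
      ∃ Δ' : Finset (Fin n), AllCyc H Δ' ∧ Δ ⊆ Δ' ∧ O ⊆ Δ' ∧ 3 ≤ Δ'.card := by
  intro k
  induction k with
  | zero =>
    intro Δ hk hg hcard _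
    refine ⟨Δ, hg, le_refl _, ?_, hcard⟩
    rw [← Finset.sdiff_eq_empty_iff_subset]
    exact Finset.card_eq_zero.mp (Nat.le_zero.mp hk)
  | succ k ih =>
    intro Δ hk hg hcard hne
    by_cases hsub : O ⊆ Δ
    · exact ⟨Δ, hg, le_refl _, hsub, hcard⟩
    · obtain ⟨p, hpO, hpΔ⟩ := Finset.not_subset.mp hsub
      obtain ⟨q, hq⟩ := hne
      rw [Finset.mem_inter] at hq
      obtain ⟨hqΔ, hqO⟩ := hq
      obtain ⟨σ, hσcl, hσq⟩ := htrans q hqO p hpO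
      -- some generator does not preserve Δ
      have hnotall : ¬ ∀ c ∈ hl, c ∈ presSub Δ := by
        intro hall
        have : Subgroup.closure {τ | τ ∈ hl} ≤ presSub Δ :=
          (Subgroup.closure_le _).2 (fun c hc => hall c hc)
        exact hpΔ (hσq ▸ (this hσcl) q hqΔ)
      push_neg at hnotall
      obtain ⟨c, hchl, hcpres⟩ := hnotall
      obtain ⟨a, b, c', hab, hac, hbc, rfl, haO, hbO, hcO⟩ := h3c c hchl
      -- the support of c must meet Δ
      have hmeet : a ∈ Δ ∨ b ∈ Δ ∨ c' ∈ Δ := by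
        by_contra hno
        push_neg at hno
        obtain ⟨h1, h2, h3⟩ := hno
        apply hcpres
        intro w hw
        rwa [cyc3_other (fun e => h1 (by rwa [← e])) (fun e => h2 (by rwa [← e])) (fun e => h3 (by rwa [← e]))]
      -- the support of c is not contained in Δ
      have hnotsub : ¬ (a ∈ Δ ∧ b ∈ Δ ∧ c' ∈ Δ) := by
        rintro ⟨h1, h2, h3⟩
        apply hcpres
        intro w hw
        rcases eq_or_ne w a with rfl | hwa
        · rw [cyc3_fst hab hac]; exact h2
        rcases eq_or_ne w b with rfl | hwb
        · rw [cyc3_snd hac hbc]; exact h3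
        rcases eq_or_ne w c' with rfl | hwc
        · rw [cyc3_trd]; exact h1
        · rwa [cyc3_other hwa hwb hwc]
      have hc3H : cyc3 a b c' ∈ H := hcl _ hchl
      -- absorb, with the overlap rotated to the first coordinate
      have habs : ∃ Δ' : Finset (Fin n), AllCyc H Δ' ∧ Δ ⊆ Δ' ∧
          a ∈ Δ' ∧ b ∈ Δ' ∧ c' ∈ Δ' ∧ Δ' ⊆ Δ ∪ {a, b, c'} := by
        rcases hmeet with hm | hm | hm
        · obtain ⟨Δ', h1, h2, h3, h4, h5⟩ := allCyc_absorb hg hcard hab hac hbc hm hc3H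
          exact ⟨Δ', h1, h2, h2 hm, h3, h4, by
            intro w hw
            have := h5 hw
            simp only [Finset.mem_union, Finset.mem_insert, Finset.mem_singleton] at this ⊢
            tauto⟩
        · have hrot : cyc3 a b c' = cyc3 b c' a := cyc3_rot hab hac hbc
          rw [hrot] at hc3H
          obtain ⟨Δ', h1, h2, h3, h4, h5⟩ := allCyc_absorb hg hcard hbc hab.symm hac.symm hm hc3H
          exact ⟨Δ', h1, h2, h4, h2 hm, h3, by
            intro w hw
            have := h5 hw
            simp only [Finset.mem_union, Finset.mem_insert, Finset.mem_singleton] at this ⊢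
            tauto⟩
        · have hrot : cyc3 a b c' = cyc3 c' a b := by
            rw [cyc3_rot hab hac hbc, cyc3_rot hbc hab.symm hac.symm]
          rw [hrot] at hc3H
          obtain ⟨Δ', h1, h2, h3, h4, h5⟩ := allCyc_absorb hg hcard hac.symm hbc.symm hab hm hc3H
          exact ⟨Δ', h1, h2, h3, h4, h2 hm, by
            intro w hw
            have := h5 hw
            simp only [Finset.mem_union, Finset.mem_insert, Finset.mem_singleton] at this ⊢
            tauto⟩
      obtain ⟨Δ', hg', hΔΔ', haΔ', hbΔ', hcΔ', hΔ'sub⟩ := habs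
      -- strict decrease of the measure
      have hms : (O \ Δ').card < (O \ Δ).card := by
        apply Finset.card_lt_card
        rw [Finset.ssubset_iff_of_subset (Finset.sdiff_subset_sdiff (le_refl O) hΔΔ')]
        -- need a point in O \ Δ not in O \ Δ'
        have hnew : ∃ m, m ∈ O ∧ m ∉ Δ ∧ m ∈ Δ' := by
          by_cases h1 : a ∈ Δ
          · by_cases h2 : b ∈ Δ
            · by_cases h3 : c' ∈ Δ
              · exact absurd ⟨h1, h2, h3⟩ hnotsub
              · exact ⟨c', hcO, h3, hcΔ'⟩
            · exact ⟨b, hbO, h2, hbΔ'⟩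
          · exact ⟨a, haO, h1, haΔ'⟩
        obtain ⟨m, hmO, hmΔ, hmΔ'⟩ := hnew
        exact ⟨m, Finset.mem_sdiff.mpr ⟨hmO, hmΔ⟩, fun hc => (Finset.mem_sdiff.mp hc).2 hmΔ'⟩
      have hk' : (O \ Δ').card ≤ k := by omega
      obtain ⟨Δ'', hg'', h1, h2, h3⟩ := ih Δ' hk' hg'
        (le_trans hcard (Finset.card_le_card hΔΔ'))
        ⟨q, Finset.mem_inter.mpr ⟨hΔΔ' hqΔ, hqO⟩⟩
      exact ⟨Δ'', hg'', le_trans hΔΔ' h1, h2, h3⟩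


/-- realize a partial 3-point map inside a good set covering everything. -/
lemma exists_three_map {Δ : Finset (Fin n)} (hg : AllCyc H Δ) (hcard : 5 ≤ Δ.card)
    (huniv : ∀ x : Fin n, x ∈ Δ) (p0 p1 p2 q1 q2 : Fin n)
    (d01 : p0 ≠ p1) (d02 : p0 ≠ p2) (d12 : p1 ≠ p2)
    (dq01 : p0 ≠ q1) (dq02 : p0 ≠ q2) (dq12 : q1 ≠ q2) :
    ∃ σ : Equiv.Perm (Fin n), σ ∈ H ∧ σ p0 = p0 ∧ σ q1 = p1 ∧ σ q2 = p2 := by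
  obtain ⟨σ₂, hσ₂H, hσ₂q1, hσ₂fix, -, -⟩ :=
    move_pt hg (huniv q1) (huniv p1) ({p0} : Finset (Fin n))
      (by simp [dq01.symm]) (by simp [d01.symm]) (by simp; omega)
  have hσ₂p0 : σ₂ p0 = p0 := hσ₂fix p0 (Finset.mem_singleton_self _)
  have hu3 : σ₂ q2 ∉ ({p0, p1} : Finset (Fin n)) := by
    simp only [Finset.mem_insert, Finset.mem_singleton, not_or]
    constructor
    · rw [← hσ₂p0]
      exact fun e => dq02.symm (σ₂.injective e)
    · rw [← hσ₂q1]
      exact fun e => dq12.symm (σ₂.injective e)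
  obtain ⟨σ₃, hσ₃H, hσ₃q2, hσ₃fix, -, -⟩ :=
    move_pt hg (huniv (σ₂ q2)) (huniv p2) ({p0, p1} : Finset (Fin n))
      hu3 (by simp [d02.symm, d12.symm]) (by
        have := Finset.card_insert_le p0 ({p1} : Finset (Fin n))
        simp only [Finset.card_singleton] at this
        omega)
  refine ⟨σ₃ * σ₂, mul_mem hσ₃H hσ₂H, ?_, ?_, ?_⟩
  · rw [Equiv.Perm.mul_apply, hσ₂p0]
    exact hσ₃fix p0 (by simp)
  · rw [Equiv.Perm.mul_apply, hσ₂q1]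
    exact hσ₃fix p1 (by simp)
  · rw [Equiv.Perm.mul_apply, hσ₃q2]

end TailAux

open TailAux in
set_option maxHeartbeats 1000000 in
/-- **Tail Lemma.** Let `n ≥ 5`, `3 ≤ n₁ ≤ n − 2` (1-indexed in the paper; here
`O₁ = {0,…,n₁−1}` and `O₂ = {0} ∪ {n₁,…,n−1}` in 0-indexed coordinates). If `h₁` is a
tuple of 3-cycles supported in `O₁`, transitive on `O₁`, with product 1, and `h₂` is a
tuple of 3-cycles supported in `O₂`, transitive on `O₂`, with product 1, then
`(h₁, h₂, (1 n₁+1 n₁+2), (1 n₁+2 n₁+1))` is braid equivalent to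
`(h₁, h₂, (1 2 3), (1 3 2))`. -/
theorem tail_lemma (n n₁ : ℕ) (hn : 5 ≤ n) (h3 : 3 ≤ n₁) (hle : n₁ ≤ n - 2)
    (h₁ h₂ : List (Equiv.Perm (Fin n)))
    (h₁3 : ∀ σ ∈ h₁, σ.IsThreeCycle)
    (h₂3 : ∀ σ ∈ h₂, σ.IsThreeCycle)
    (h₁supp : ∀ σ ∈ h₁, ∀ x : Fin n, σ x ≠ x → (x : ℕ) < n₁)
    (h₂supp : ∀ σ ∈ h₂, ∀ x : Fin n, σ x ≠ x → ((x : ℕ) = 0 ∨ n₁ ≤ (x : ℕ)))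
    (h₁trans : ∀ x y : Fin n, (x : ℕ) < n₁ → (y : ℕ) < n₁ →
      ∃ σ ∈ Subgroup.closure {τ | τ ∈ h₁}, σ x = y)
    (h₂trans : ∀ x y : Fin n, ((x : ℕ) = 0 ∨ n₁ ≤ (x : ℕ)) →
      ((y : ℕ) = 0 ∨ n₁ ≤ (y : ℕ)) →
      ∃ σ ∈ Subgroup.closure {τ | τ ∈ h₂}, σ x = y)
    (h₁prod : h₁.prod = 1) (h₂prod : h₂.prod = 1) :
    BraidEquiv
      (h₁ ++ h₂ ++ [cyc3 ⟨0, by omega⟩ ⟨n₁, by omega⟩ ⟨n₁ + 1, by omega⟩,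
        (cyc3 ⟨0, by omega⟩ ⟨n₁, by omega⟩ ⟨n₁ + 1, by omega⟩)⁻¹])
      (h₁ ++ h₂ ++ [cyc3 ⟨0, by omega⟩ ⟨1, by omega⟩ ⟨2, by omega⟩,
        (cyc3 ⟨0, by omega⟩ ⟨1, by omega⟩ ⟨2, by omega⟩)⁻¹]) := by
  classical
  set H : Subgroup (Equiv.Perm (Fin n)) := Subgroup.closure {τ | τ ∈ h₁ ++ h₂} with hHdef
  have hmem1 : ∀ c ∈ h₁, c ∈ H := fun c hc =>
    Subgroup.subset_closure (by simp [hc])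
  have hmem2 : ∀ c ∈ h₂, c ∈ H := fun c hc =>
    Subgroup.subset_closure (by simp [hc])
  set O₁ : Finset (Fin n) := Finset.univ.filter (fun x => (x : ℕ) < n₁) with hO₁def
  set O₂ : Finset (Fin n) := Finset.univ.filter (fun x => (x : ℕ) = 0 ∨ n₁ ≤ (x : ℕ)) with hO₂def
  have hO₁mem : ∀ x : Fin n, x ∈ O₁ ↔ (x : ℕ) < n₁ := by
    intro x; simp [hO₁def]
  have hO₂mem : ∀ x : Fin n, x ∈ O₂ ↔ ((x : ℕ) = 0 ∨ n₁ ≤ (x : ℕ)) := by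
    intro x; simp [hO₂def]
  have h3c1 : ∀ c ∈ h₁, ∃ a b c' : Fin n, a ≠ b ∧ a ≠ c' ∧ b ≠ c' ∧ c = cyc3 a b c' ∧
      a ∈ O₁ ∧ b ∈ O₁ ∧ c' ∈ O₁ := by
    intro c hc
    obtain ⟨a, b, c', hab, hac, hbc, heq, ma, mb, mc⟩ := isThreeCycle_cyc3 (h₁3 c hc)
    exact ⟨a, b, c', hab, hac, hbc, heq,
      (hO₁mem a).mpr (h₁supp c hc a ma), (hO₁mem b).mpr (h₁supp c hc b mb),
      (hO₁mem c').mpr (h₁supp c hc c' mc)⟩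
  have h3c2 : ∀ c ∈ h₂, ∃ a b c' : Fin n, a ≠ b ∧ a ≠ c' ∧ b ≠ c' ∧ c = cyc3 a b c' ∧
      a ∈ O₂ ∧ b ∈ O₂ ∧ c' ∈ O₂ := by
    intro c hc
    obtain ⟨a, b, c', hab, hac, hbc, heq, ma, mb, mc⟩ := isThreeCycle_cyc3 (h₂3 c hc)
    exact ⟨a, b, c', hab, hac, hbc, heq,
      (hO₂mem a).mpr (h₂supp c hc a ma), (hO₂mem b).mpr (h₂supp c hc b mb),
      (hO₂mem c').mpr (h₂supp c hc c' mc)⟩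
  have htrans1 : ∀ x ∈ O₁, ∀ y ∈ O₁, ∃ σ ∈ Subgroup.closure {τ | τ ∈ h₁}, σ x = y := by
    intro x hx y hy
    exact h₁trans x y ((hO₁mem x).mp hx) ((hO₁mem y).mp hy)
  have htrans2 : ∀ x ∈ O₂, ∀ y ∈ O₂, ∃ σ ∈ Subgroup.closure {τ | τ ∈ h₂}, σ x = y := by
    intro x hx y hy
    exact h₂trans x y ((hO₂mem x).mp hx) ((hO₂mem y).mp hy)
  -- h₁ is nonempty
  have hne1 : h₁ ≠ [] := by
    intro he
    obtain ⟨σ, hσ, he2⟩ := h₁trans ⟨0, by omega⟩ ⟨1, by omega⟩ (by simp; omega) (by simp; omega)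
    have hσ1 : σ = 1 := by
      have hs : {τ : Equiv.Perm (Fin n) | τ ∈ h₁} = ∅ := by
        rw [he]; simp
      rw [hs, Subgroup.closure_empty, Subgroup.mem_bot] at hσ
      exact hσ
    rw [hσ1] at he2
    simp [Fin.ext_iff] at he2
  obtain ⟨c₀, hc₀⟩ := List.exists_mem_of_ne_nil h₁ hne1
  obtain ⟨a, b, c, hab, hac, hbc, heq, maO, mbO, mcO⟩ := h3c1 c₀ hc₀
  have hg0 : AllCyc H {a, b, c} :=
    allCyc_triple hab hac hbc (heq ▸ hmem1 c₀ hc₀)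
  have hcard0 : ({a, b, c} : Finset (Fin n)).card = 3 :=
    Finset.card_eq_three.mpr ⟨a, b, c, hab, hac, hbc, rfl⟩
  -- grow to cover O₁
  obtain ⟨Δ₁, hgΔ₁, hsub01, hO₁Δ₁, hcardΔ₁⟩ :=
    grow hmem1 htrans1 h3c1 (O₁ \ {a, b, c}).card {a, b, c} le_rfl hg0
      (by rw [hcard0]) ⟨a, Finset.mem_inter.mpr ⟨Finset.mem_insert_self _ _, maO⟩⟩
  -- grow to cover O₂
  have h0O₁ : (⟨0, by omega⟩ : Fin n) ∈ O₁ := (hO₁mem _).mpr (by simp; omega)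
  have h0O₂ : (⟨0, by omega⟩ : Fin n) ∈ O₂ := (hO₂mem _).mpr (by simp)
  obtain ⟨Δ₂, hgΔ₂, hsub12, hO₂Δ₂, hcardΔ₂⟩ :=
    grow hmem2 htrans2 h3c2 (O₂ \ Δ₁).card Δ₁ le_rfl hgΔ₁ hcardΔ₁
      ⟨⟨0, by omega⟩, Finset.mem_inter.mpr ⟨hO₁Δ₁ h0O₁, h0O₂⟩⟩
  -- Δ₂ is everything
  have huniv : ∀ x : Fin n, x ∈ Δ₂ := by
    intro x
    by_cases hx : (x : ℕ) < n₁
    · exact hsub12 (hO₁Δ₁ ((hO₁mem x).mpr hx))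
    · exact hO₂Δ₂ ((hO₂mem x).mpr (Or.inr (by omega)))
  have hcard2 : 5 ≤ Δ₂.card := by
    have : (Finset.univ : Finset (Fin n)) ⊆ Δ₂ := fun x _ => huniv x
    have := Finset.card_le_card this
    simp only [Finset.card_univ, Fintype.card_fin] at this
    omega
  obtain ⟨σ, hσH, hσp0, hσq1, hσq2⟩ :=
    exists_three_map hgΔ₂ hcard2 huniv
      ⟨0, by omega⟩ ⟨1, by omega⟩ ⟨2, by omega⟩ ⟨n₁, by omega⟩ ⟨n₁ + 1, by omega⟩
      (by simp [Fin.ext_iff]) (by simp [Fin.ext_iff]) (by simp [Fin.ext_iff])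
      (by simp [Fin.ext_iff]; omega) (by simp [Fin.ext_iff]) (by simp [Fin.ext_iff])
  have hconj := cyc3_conj σ (⟨0, by omega⟩ : Fin n) ⟨n₁, by omega⟩ ⟨n₁ + 1, by omega⟩
  simp only [hσp0, hσq1, hσq2] at hconj
  have hprod : (h₁ ++ h₂).prod = 1 := by
    rw [List.prod_append, h₁prod, h₂prod, one_mul]
  have hb := braid_conj (h₁ ++ h₂) hprod hσH
    (cyc3 ⟨0, by omega⟩ ⟨n₁, by omega⟩ ⟨n₁ + 1, by omega⟩)
  simp only [hconj] at hb
  simpa only [List.append_assoc, List.cons_append, List.nil_append] using hb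
end
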